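/- arXiv:2405.05544 — 7 statements merged into one kernel-verified Lean document; each statement's English description precedes it below -/
import Mathlib

section
/- For all v, w ∈ P(n), the strict inequality v ≺_P w holds if and only if w can be obtained from v by applying a finite nonempty sequence of addition and/or swap operators (i.e., (v, w) lies in the transitive closure of the one-step relation in which a single addition operator A^(k) or a single swap operator S^(j,k) is applied). -/
open Finset

/-- Cumulative sum: `x 0 + ... + x k`. -/
def cum {n : ℕ} (x : Fin n → ℤ) (k : Fin n) : ℤ := ∑ i ∈ Finset.Iic k, x i

/-- The partial order `⪯`: every partial sum of `x` is at most that of `y`. -/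
def ple {n : ℕ} (x y : Fin n → ℤ) : Prop := ∀ k : Fin n, cum x k ≤ cum y k

/-- Membership in `P(n)`: all entries are `1` or `-1`. -/
def isPM {n : ℕ} (v : Fin n → ℤ) : Prop := ∀ i, v i = 1 ∨ v i = -1

/-- Membership in `Q(n)`. -/
def inQ {n : ℕ} (v : Fin n → ℤ) : Prop := isPM v ∧ ¬ ple v 0 ∧ ¬ ple 0 v

/-- Standard inner product on `ℤ^n`. -/
def dotp {n : ℕ} (x y : Fin n → ℤ) : ℤ := ∑ i, x i * y i

/-- The ±1 vector of a subset `S`. -/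
def pS {n : ℕ} (S : Finset (Fin n)) : Fin n → ℤ := fun i => if i ∈ S then 1 else -1

/-- The vector `m_k`: first `k` entries 1, next `k+1` entries −1, rest 1 (0-indexed). -/
def mvec (n k : ℕ) : Fin n → ℤ := fun i => if i.val < k then 1 else if i.val < 2 * k + 1 then -1 else 1

/-- An instance of the partition problem: `c_1 ≥ c_2 ≥ ⋯ ≥ c_n ≥ 0`. -/
def monoc {n : ℕ} (c : Fin n → ℤ) : Prop := (∀ i j : Fin n, i ≤ j → c j ≤ c i) ∧ ∀ i, 0 ≤ c i

/-- One application of a single addition operator `A^(k)` or swap operator `S^(j,k)`. -/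
def step {n : ℕ} (v w : Fin n → ℤ) : Prop :=
  (∃ k : Fin n, v k = -1 ∧ w = Function.update v k 1) ∨
  (∃ j k : Fin n, j < k ∧ v j = -1 ∧ v k = 1 ∧
    w = Function.update (Function.update v j 1) k (-1))

/-!
Both operators raise the vector of partial sums `cum v` strictly in the product order, which
gives one direction. Conversely, let `v ⪯ w`, `v ≠ w`. The gaps `cum w k - cum v k` are even and
nonnegative, and at the first index `j` where `v` and `w` differ the gap is `2`, so `v j = -1`.
If no gap vanishes from `j` on, they are all at least `2` there and `A^(j) v ⪯ w`. Otherwise, at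
the first `K` with vanishing gap, the gap drops from at least `2` to `0`, so `v K = 1`, and
`S^(j,K) v ⪯ w`. Each step lowers the total gap, so iterating reaches `w`.
-/

section

variable {n : ℕ}

lemma ple_iff_cum_le {x y : Fin n → ℤ} : ple x y ↔ cum x ≤ cum y := Iff.rfl

lemma cum_sub_cum (v w : Fin n → ℤ) (k : Fin n) :
    cum w k - cum v k = ∑ i ∈ Iic k, (w i - v i) := by
  rw [cum, cum, sum_sub_distrib]

lemma cum_update (v : Fin n → ℤ) (j : Fin n) (a : ℤ) (k : Fin n) :
    cum (Function.update v j a) k = cum v k + if j ≤ k then a - v j else 0 := by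
  rw [eq_add_of_sub_eq' (cum_sub_cum v _ k)]
  have hdiff : ∀ i, Function.update v j a i - v i = if i = j then a - v j else 0 := fun i => by
    rcases eq_or_ne i j with rfl | h <;> simp [*]
  simp [hdiff, sum_ite_eq']

lemma exists_cum_eq_cum_add {j k : Fin n} (hjk : j < k) :
    ∃ k', j ≤ k' ∧ k' < k ∧ ∀ x : Fin n → ℤ, cum x k = cum x k' + x k := by
  refine ⟨⟨k - 1, by omega⟩, ?_, ?_, fun x => ?_⟩
  · rw [Fin.lt_def] at hjk; rw [Fin.le_def]; simp only; omega
  · rw [Fin.lt_def]; simp only; omega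
  have hIio : Iio k = Iic ⟨k - 1, by omega⟩ := by
    ext i; simp only [mem_Iio, mem_Iic, Fin.lt_def, Fin.le_def]; omega
  rw [cum, cum, Iic_eq_cons_Iio, sum_cons, hIio, add_comm]

lemma isPM_update {v : Fin n → ℤ} (hv : isPM v) (j : Fin n) {a : ℤ} (ha : a = 1 ∨ a = -1) :
    isPM (Function.update v j a) := by
  intro i
  rcases eq_or_ne i j with rfl | h
  · simpa using ha
  · rw [Function.update_of_ne h]; exact hv i

lemma two_dvd_cum_sub_cum {v w : Fin n → ℤ} (hv : isPM v) (hw : isPM w) (k : Fin n) :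
    2 ∣ cum w k - cum v k := by
  rw [cum_sub_cum]
  exact dvd_sum fun i _ => by rcases hv i with h | h <;> rcases hw i with h' | h' <;> omega

lemma cum_add_two_le {v w : Fin n → ℤ} (hv : isPM v) (hw : isPM w) {k : Fin n}
    (h : cum v k < cum w k) : cum v k + 2 ≤ cum w k := by
  obtain ⟨c, hc⟩ := two_dvd_cum_sub_cum hv hw k
  omega

lemma cum_addOp {v : Fin n → ℤ} {j : Fin n} (hj : v j = -1) (m : Fin n) :
    cum (Function.update v j 1) m = cum v m + if j ≤ m then 2 else 0 := by
  rw [cum_update, hj]; norm_num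

lemma cum_swapOp {v : Fin n → ℤ} {j k : Fin n} (hjk : j < k) (hj : v j = -1) (hk : v k = 1)
    (m : Fin n) :
    cum (Function.update (Function.update v j 1) k (-1)) m
      = cum v m + if j ≤ m ∧ m < k then 2 else 0 := by
  rw [cum_update, cum_update, Function.update_of_ne hjk.ne', hj, hk]
  rw [Fin.lt_def] at hjk
  simp only [Fin.le_def, Fin.lt_def]
  split_ifs <;> omega

lemma cum_lt_of_step {v w : Fin n → ℤ} (h : step v w) : cum v < cum w := by
  rw [Pi.lt_def]
  rcases h with ⟨j, hj, rfl⟩ | ⟨j, k, hjk, hj, hk, rfl⟩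
  · refine ⟨fun m => ?_, j, ?_⟩ <;> rw [cum_addOp hj] <;> split_ifs <;> simp_all
  · refine ⟨fun m => ?_, j, ?_⟩ <;> rw [cum_swapOp hjk hj hk] <;> split_ifs <;> simp_all

lemma cum_lt_of_transGen_step {v w : Fin n → ℤ} (h : Relation.TransGen step v w) :
    cum v < cum w := by
  have := Relation.TransGen.lift cum (fun _ _ => cum_lt_of_step) _ _ h
  rwa [Relation.transGen_eq_self] at this

lemma isPM_of_step {v w : Fin n → ℤ} (hv : isPM v) (h : step v w) : isPM w := by
  rcases h with ⟨j, -, rfl⟩ | ⟨j, k, -, -, -, rfl⟩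
  · exact isPM_update hv j (.inl rfl)
  · exact isPM_update (isPM_update hv j (.inl rfl)) k (.inr rfl)

lemma ple_addOp {v w : Fin n → ℤ} {j : Fin n} (hj : v j = -1) (hle : ple v w)
    (hgap : ∀ m, j ≤ m → cum v m + 2 ≤ cum w m) : ple (Function.update v j 1) w := by
  intro m
  rw [cum_addOp hj]
  split_ifs with hm
  exacts [hgap m hm, by simpa using hle m]

lemma ple_swapOp {v w : Fin n → ℤ} {j k : Fin n} (hjk : j < k) (hj : v j = -1) (hk : v k = 1)
    (hle : ple v w) (hgap : ∀ m, j ≤ m → m < k → cum v m + 2 ≤ cum w m) :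
    ple (Function.update (Function.update v j 1) k (-1)) w := by
  intro m
  rw [cum_swapOp hjk hj hk]
  split_ifs with hm
  exacts [hgap m hm.1 hm.2, by simpa using hle m]

lemma exists_eq_neg_one_and_cum_add_two_eq {v w : Fin n → ℤ} (hv : isPM v) (hw : isPM w) (hle : ple v w)
    (hne : v ≠ w) : ∃ j, v j = -1 ∧ cum v j + 2 = cum w j := by
  obtain ⟨j, hj, hmin⟩ := wellFounded_lt.has_min {i | v i ≠ w i} (Function.ne_iff.1 hne)
  have hgap : cum w j - cum v j = w j - v j := by
    rw [cum_sub_cum, sum_eq_single j _ (by simp)]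
    intro i hij hne
    have : ¬ v i ≠ w i := fun h => hmin i h (lt_of_le_of_ne (mem_Iic.1 hij) hne)
    omega
  have hj : v j ≠ w j := hj
  have := hle j
  refine ⟨j, ?_, ?_⟩ <;> rcases hv j with h | h <;> rcases hw j with h' | h' <;> omega

lemma exists_step_ple_of_ple {v w : Fin n → ℤ} (hv : isPM v) (hw : isPM w) (hle : ple v w)
    (hne : v ≠ w) : ∃ u, step v u ∧ ple u w := by
  obtain ⟨j, hvj, hj⟩ := exists_eq_neg_one_and_cum_add_two_eq hv hw hle hne
  by_cases hz : ∃ k, j ≤ k ∧ cum v k = cum w k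
  · obtain ⟨K, ⟨hjleK, hK⟩, hmin⟩ := wellFounded_lt.has_min _ hz
    have hgap : ∀ m, j ≤ m → m < K → cum v m + 2 ≤ cum w m := fun m hjm hmK =>
      cum_add_two_le hv hw (lt_of_le_of_ne (hle m) fun h => hmin m ⟨hjm, h⟩ hmK)
    have hjK : j < K := lt_of_le_of_ne hjleK fun h => by subst h; linarith
    obtain ⟨K', hjK', hK'K, hcum⟩ := exists_cum_eq_cum_add hjK
    have hvK : v K = 1 := by
      have := hgap K' hjK' hK'K
      rw [hcum, hcum] at hK
      rcases hv K with h | h <;> rcases hw K with h' | h' <;> omega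
    exact ⟨_, .inr ⟨j, K, hjK, hvj, hvK, rfl⟩, ple_swapOp hjK hvj hvK hle hgap⟩
  · push Not at hz
    exact ⟨_, .inl ⟨j, hvj, rfl⟩, ple_addOp hvj hle fun m hm =>
      cum_add_two_le hv hw (lt_of_le_of_ne (hle m) (hz m hm))⟩

theorem transGen_step_of_ple {v w : Fin n → ℤ} (hv : isPM v) (hw : isPM w) (hle : ple v w)
    (hne : v ≠ w) : Relation.TransGen step v w := by
  obtain ⟨u, hvu, huw⟩ := exists_step_ple_of_ple hv hw hle hne
  by_cases h : u = w
  · exact h ▸ .single hvu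
  · exact .head hvu (transGen_step_of_ple (isPM_of_step hv hvu) hw huw h)
termination_by (∑ k, (cum w k - cum v k)).toNat
decreasing_by
  have hvu' := cum_lt_of_step hvu
  have hsum : ∑ k, cum v k < ∑ k, cum u k :=
    sum_lt_sum (fun k _ => hvu'.le k) (by simpa using (Pi.lt_def.1 hvu').2)
  have huw' : ∑ k, cum u k ≤ ∑ k, cum w k := sum_le_sum fun k _ => huw k
  simp only [sum_sub_distrib]
  omega

end

theorem stmt0 {n : ℕ} (v w : Fin n → ℤ) (hv : isPM v) (hw : isPM w) :
    (ple v w ∧ v ≠ w) ↔ Relation.TransGen step v w := by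
  refine ⟨fun ⟨hle, hne⟩ => transGen_step_of_ple hv hw hle hne, fun h => ?_⟩
  have hlt := cum_lt_of_transGen_step h
  exact ⟨ple_iff_cum_le.2 hlt.le, fun hvw => hlt.ne (congrArg cum hvw)⟩
end

section
/- The map f is an order isomorphism from (P(n), ⪯_P) onto (M(n), ⩽): f is a bijection from P(n) to the set of all subsets of {1,…,n}, and for all v, w ∈ P(n), v ⪯_P w holds if and only if f(v) ⩽ f(w). -/
open Finset

/-- The map `f`: the element representing the integer `i+1` belongs to `fmap v`
iff entry number `n+1-(i+1)` of `v` (0-indexed: `n-1-i`) equals 1. -/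
def fmap {n : ℕ} (v : Fin n → ℤ) : Finset (Fin n) :=
  Finset.univ.filter (fun i => v ⟨n - 1 - i.val, by have := i.isLt; omega⟩ = 1)

/-- The order of `M(n)`: comparing the decreasing enumerations entrywise. -/
def Mle {n : ℕ} (A B : Finset (Fin n)) : Prop :=
  A.card ≤ B.card ∧
    ∀ (i : ℕ) (hA : i < (A.sort (· ≥ ·)).length) (hB : i < (B.sort (· ≥ ·)).length),
      (A.sort (· ≥ ·)).get ⟨i, hA⟩ ≤ (B.sort (· ≥ ·)).get ⟨i, hB⟩

/-!
Two counting reformulations make the two orders visibly the same. First, `A ⩽ B` holds iff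
`#{a ∈ A | t ≤ a} ≤ #{b ∈ B | t ≤ b}` for every threshold `t`, because the `i`-th largest
element of `A` is at least `t` exactly when `i < #{a ∈ A | t ≤ a}`. Second, the `k`-th partial
sum of a `±1` vector `v` is `2 · #{i ≤ k | v i = 1} - (k + 1)`, and under the reversal
`i ↦ n - 1 - i` the positions `i ≤ k` with `v i = 1` correspond to the elements of `f(v)` that
are at least `n - 1 - k`.
-/

section SortedCount

variable {α : Type*} [LinearOrder α]

theorem List.Pairwise.le_getElem_iff_lt_countP {l : List α} (hl : l.Pairwise (· ≥ ·)) (t : α)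
    {j : ℕ} (hj : j < l.length) : t ≤ l[j] ↔ j < l.countP (t ≤ ·) := by
  induction l generalizing j with
  | nil => simp at hj
  | cons a l ih =>
    obtain ⟨hle_a, hl⟩ := List.pairwise_cons.mp hl
    by_cases hta : t ≤ a
    · cases j with
      | zero => simp [hta]
      | succ j => simp [ih hl (Nat.lt_of_succ_lt_succ hj), hta]
    · have hlt : ∀ x ∈ a :: l, ¬t ≤ x := by
        simp only [List.mem_cons, forall_eq_or_imp]
        exact ⟨hta, fun x hx h => hta (h.trans (hle_a x hx))⟩
      rw [List.countP_eq_zero.mpr (by simpa using hlt)]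
      simpa using hlt _ (List.getElem_mem hj)

theorem Finset.card_filter_le_eq_countP_sort (A : Finset α) (t : α) :
    #(A.filter (t ≤ ·)) = (A.sort (· ≥ ·)).countP (t ≤ ·) := by
  rw [card_def, filter_val, ← Multiset.countP_eq_card_filter, ← sort_eq A (· ≥ ·),
    Multiset.coe_countP]

end SortedCount

theorem mle_iff_card_filter_le {n : ℕ} {A B : Finset (Fin n)} :
    Mle A B ↔ ∀ t, #(A.filter (t ≤ ·)) ≤ #(B.filter (t ≤ ·)) := by
  have hA := A.pairwise_sort (· ≥ ·)
  have hB := B.pairwise_sort (· ≥ ·)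
  simp only [Mle, card_filter_le_eq_countP_sort]
  constructor
  · rintro ⟨hcard, hget⟩ t
    set c := (A.sort (· ≥ ·)).countP (t ≤ ·)
    obtain hc | hc := Nat.eq_zero_or_pos c
    · omega
    have hcA : c ≤ (A.sort (· ≥ ·)).length := List.countP_le_length
    have hjA : c - 1 < (A.sort (· ≥ ·)).length := by omega
    have hjB : c - 1 < (B.sort (· ≥ ·)).length := by
      rw [length_sort] at hcA ⊢
      omega
    have hlt : c - 1 < (B.sort (· ≥ ·)).countP (t ≤ ·) :=
      (hB.le_getElem_iff_lt_countP t hjB).mp <|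
        ((hA.le_getElem_iff_lt_countP t hjA).mpr (by omega)).trans (hget _ hjA hjB)
    omega
  · intro h
    refine ⟨?_, fun i hiA hiB => ?_⟩
    · rcases A.eq_empty_or_nonempty with rfl | hne
      · simp
      have hmin := h (A.min' hne)
      rw [← card_filter_le_eq_countP_sort, ← card_filter_le_eq_countP_sort,
        filter_true_of_mem fun x hx => A.min'_le x hx] at hmin
      exact hmin.trans (card_filter_le _ _)
    · exact (hB.le_getElem_iff_lt_countP _ hiB).mpr <|
        ((hA.le_getElem_iff_lt_countP _ hiA).mp le_rfl).trans_le (h _)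

theorem mem_fmap {n : ℕ} {v : Fin n → ℤ} {i : Fin n} : i ∈ fmap v ↔ v i.rev = 1 := by
  simp [fmap, Fin.rev, Nat.sub_sub, Nat.add_comm]

theorem card_filter_le_fmap {n : ℕ} (v : Fin n → ℤ) (t : Fin n) :
    #((fmap v).filter (t ≤ ·)) = #((Iic t.rev).filter (v · = 1)) :=
  card_nbij' Fin.rev Fin.rev (fun x => by simp [mem_fmap, and_comm])
    (fun x => by simp [mem_fmap, Fin.le_rev_iff, and_comm]) (fun x _ => x.rev_rev)
    (fun x _ => x.rev_rev)

theorem isPM_pS {n : ℕ} (S : Finset (Fin n)) : isPM (pS S) := fun i => by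
  by_cases h : i ∈ S <;> simp [pS, h]

theorem fmap_pS_comp_rev {n : ℕ} (A : Finset (Fin n)) : fmap (pS A ∘ Fin.rev) = A := by
  ext i
  simp [mem_fmap, pS]

theorem eq_pS_fmap_comp_rev {n : ℕ} {v : Fin n → ℤ} (hv : isPM v) :
    v = pS (fmap v) ∘ Fin.rev := by
  funext i
  rcases hv i with h | h <;> simp [pS, mem_fmap, h]

theorem cum_eq_of_isPM {n : ℕ} {v : Fin n → ℤ} (hv : isPM v) (k : Fin n) :
    cum v k = 2 * #((Iic k).filter (v · = 1)) - (k + 1 : ℕ) := by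
  have hsign : ∀ i, v i = 2 * (if v i = 1 then 1 else 0) - 1 := fun i => by
    rcases hv i with h | h <;> simp [h]
  rw [cum, sum_congr rfl fun i _ => hsign i, sum_sub_distrib, ← mul_sum, sum_boole, sum_const,
    Fin.card_Iic]
  simp

theorem cum_le_cum_iff_of_isPM {n : ℕ} {v w : Fin n → ℤ} (hv : isPM v) (hw : isPM w)
    (k : Fin n) :
    cum v k ≤ cum w k ↔ #((Iic k).filter (v · = 1)) ≤ #((Iic k).filter (w · = 1)) := by
  rw [cum_eq_of_isPM hv, cum_eq_of_isPM hw]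
  omega

theorem stmt2_general {n : ℕ} :
    (∀ A : Finset (Fin n), ∃! v : Fin n → ℤ, isPM v ∧ fmap v = A) ∧
    (∀ v w : Fin n → ℤ, isPM v → isPM w → (ple v w ↔ Mle (fmap v) (fmap w))) := by
  refine ⟨fun A => ⟨pS A ∘ Fin.rev, ⟨fun i => isPM_pS A i.rev, fmap_pS_comp_rev A⟩, ?_⟩,
    fun v w hv hw => ?_⟩
  · rintro v ⟨hv, rfl⟩
    exact eq_pS_fmap_comp_rev hv
  · simp only [ple, cum_le_cum_iff_of_isPM hv hw, mle_iff_card_filter_le, card_filter_le_fmap]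
    exact Fin.rev_surjective.forall

theorem stmt2 {n : ℕ} (hn : 1 ≤ n) :
    (∀ A : Finset (Fin n), ∃! v : Fin n → ℤ, isPM v ∧ fmap v = A) ∧
    (∀ v w : Fin n → ℤ, isPM v → isPM w → (ple v w ↔ Mle (fmap v) (fmap w))) :=
  stmt2_general
end

section
/- For n ≥ 3, the width of Q(n) equals the width of P(n); that is, the maximum cardinality of an antichain of (Q(n), ⪯_Q) equals the maximum cardinality of an antichain of (P(n), ⪯_P). -/
open Finset

namespace S4X
variable {n : ℕ}

/-- ±1 integer vector of a Bool vector. -/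
def val (b : Fin n → Bool) : Fin n → ℤ := fun i => if b i then 1 else -1

lemma isPM_val (b : Fin n → Bool) : isPM (val b) := by
  intro i; unfold val; split <;> simp

lemma val_injective : Function.Injective (val (n := n)) := by
  intro a b h
  funext i
  have := congrFun h i
  unfold val at this
  cases ha : a i <;> cases hb : b i <;> simp [ha, hb] at this ⊢

/-- Bool vector of an isPM vector. -/
def toB (v : Fin n → ℤ) : Fin n → Bool := fun i => v i = 1

lemma val_toB {v : Fin n → ℤ} (h : isPM v) : val (toB v) = v := by
  funext i
  rcases h i with h1 | h1 <;> simp [val, toB, h1]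

def cb (b : Fin n → Bool) (k : Fin n) : ℤ := cum (val b) k
def wtb (b : Fin n → Bool) : ℤ := ∑ k, cb b k
def pleB (x y : Fin n → Bool) : Prop := ple (val x) (val y)

lemma pleB_refl (x : Fin n → Bool) : pleB x x := fun _ => le_rfl
lemma pleB_trans {x y z : Fin n → Bool} (h : pleB x y) (h' : pleB y z) : pleB x z :=
  fun k => le_trans (h k) (h' k)

lemma cum_fst {x : Fin n → ℤ} (h : 0 < n) : cum x ⟨0, h⟩ = x ⟨0, h⟩ := by
  unfold cum
  have : Finset.Iic (⟨0, h⟩ : Fin n) = {⟨0, h⟩} := by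
    ext a
    simp [Fin.le_def, Fin.ext_iff]
  rw [this, Finset.sum_singleton]

lemma cum_succ {x : Fin n → ℤ} {m : ℕ} (h : m + 1 < n) :
    cum x ⟨m + 1, h⟩ = cum x ⟨m, by omega⟩ + x ⟨m + 1, h⟩ := by
  unfold cum
  have : Finset.Iic (⟨m+1, h⟩ : Fin n) = insert ⟨m+1, h⟩ (Finset.Iic ⟨m, by omega⟩) := by
    ext a
    simp [Fin.le_def, Fin.ext_iff]
    omega
  rw [this, Finset.sum_insert (by simp [Fin.le_def])]
  ring

lemma cum_inj {x y : Fin n → ℤ} (h : ∀ k, cum x k = cum y k) : x = y := by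
  funext i
  obtain ⟨m, hm⟩ := i
  induction m with
  | zero => have := h ⟨0, hm⟩; rwa [cum_fst hm, cum_fst hm] at this
  | succ m ih =>
      have h1 := h ⟨m + 1, hm⟩
      rw [cum_succ hm, cum_succ hm] at h1
      have h2 := h ⟨m, by omega⟩
      omega

/-- parity of cum: cum ≡ k+1 mod 2 for ±1 vectors -/
lemma cb_parity (b : Fin n → Bool) (k : Fin n) : cb b k % 2 = (k.val + 1 : ℤ) % 2 := by
  unfold cb cum
  have : (∑ i ∈ Finset.Iic k, val b i) % 2 = (∑ i ∈ Finset.Iic k, (1:ℤ)) % 2 := by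
    rw [Finset.sum_int_mod (Finset.Iic k) 2 (val b),
        Finset.sum_int_mod (Finset.Iic k) 2 (fun _ => (1:ℤ))]
    congr 1
    apply Finset.sum_congr rfl
    intro i _
    unfold val; split <;> decide
  rw [this, Finset.sum_const, Fin.card_Iic]
  simp
lemma cb_lower (b : Fin n → Bool) (k : Fin n) : -(n:ℤ) ≤ cb b k := by
  unfold cb cum
  calc -(n:ℤ) ≤ -(k.val+1 : ℤ) := by have := k.isLt; omega
  _ = ∑ i ∈ Finset.Iic k, (-1 : ℤ) := by rw [Finset.sum_const, Fin.card_Iic]; push_cast; ring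
  _ ≤ _ := by
      apply Finset.sum_le_sum
      intro i _
      unfold val; split <;> omega

lemma wtb_lower (b : Fin n → Bool) : -(n*n : ℤ) ≤ wtb b := by
  unfold wtb
  calc -(n*n:ℤ) = ∑ _k : Fin n, -(n:ℤ) := by rw [Finset.sum_const]; simp
  _ ≤ _ := Finset.sum_le_sum (fun k _ => cb_lower b k)




/-- can apply an up-move at position k -/
def canUp (k : Fin n) (b : Fin n → Bool) : Prop :=
  b k = false ∧ ∀ j : Fin n, j.val = k.val + 1 → b j = true

def canDown (k : Fin n) (b : Fin n → Bool) : Prop :=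
  b k = true ∧ ∀ j : Fin n, j.val = k.val + 1 → b j = false

instance (k : Fin n) (b : Fin n → Bool) : Decidable (canUp k b) := by
  unfold canUp; infer_instance
instance (k : Fin n) (b : Fin n → Bool) : Decidable (canDown k b) := by
  unfold canDown; infer_instance

def upF (k : Fin n) (b : Fin n → Bool) : Fin n → Bool :=
  fun j => if j = k then true else if j.val = k.val + 1 then false else b j

def downF (k : Fin n) (b : Fin n → Bool) : Fin n → Bool :=
  fun j => if j = k then false else if j.val = k.val + 1 then true else b j

lemma canUp_downF (k : Fin n) (b : Fin n → Bool) : canUp k (downF k b) := by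
  constructor
  · simp [downF]
  · intro j hj
    have : j ≠ k := by intro h; subst h; omega
    simp [downF, this, hj]

lemma canDown_upF (k : Fin n) (b : Fin n → Bool) : canDown k (upF k b) := by
  constructor
  · simp [upF]
  · intro j hj
    have : j ≠ k := by intro h; subst h; omega
    simp [upF, this, hj]

lemma downF_upF {k : Fin n} {b : Fin n → Bool} (h : canUp k b) : downF k (upF k b) = b := by
  funext j
  by_cases h1 : j = k
  · subst h1; simp [downF, upF, h.1]
  · by_cases h2 : j.val = k.val + 1
    · simp [downF, upF, h1, h2, h.2 j h2]
    · simp [downF, upF, h1, h2]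

lemma upF_downF {k : Fin n} {b : Fin n → Bool} (h : canDown k b) : upF k (downF k b) = b := by
  funext j
  by_cases h1 : j = k
  · subst h1; simp [downF, upF, h.1]
  · by_cases h2 : j.val = k.val + 1
    · simp [downF, upF, h1, h2, h.2 j h2]
    · simp [downF, upF, h1, h2]

/-- effect of up-move on the ±1 values -/
lemma val_upF {k : Fin n} {b : Fin n → Bool} (h : canUp k b) (i : Fin n) :
    val (upF k b) i = val b i + (if i = k then 2 else 0) + (if i.val = k.val + 1 then -2 else 0) := by
  by_cases h1 : i = k
  · subst h1
    have : ¬ (i.val = i.val + 1) := by omega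
    simp [val, upF, h.1, this]
  · by_cases h2 : i.val = k.val + 1
    · simp [val, upF, h1, h2, h.2 i h2]
    · simp [val, upF, h1, h2]

lemma cb_upF {k : Fin n} {b : Fin n → Bool} (h : canUp k b) (j : Fin n) :
    cb (upF k b) j = cb b j + (if j = k then 2 else 0) := by
  unfold cb cum
  have e1 : ∑ i ∈ Finset.Iic j, val (upF k b) i
      = ∑ i ∈ Finset.Iic j, (val b i + (if i = k then 2 else 0) + (if i.val = k.val + 1 then (-2:ℤ) else 0)) :=
    Finset.sum_congr rfl (fun i _ => val_upF h i)
  rw [e1, Finset.sum_add_distrib, Finset.sum_add_distrib]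
  have e2 : ∑ i ∈ Finset.Iic j, (if i = k then (2:ℤ) else 0) = if k ≤ j then 2 else 0 := by
    rw [Finset.sum_ite_eq' (Finset.Iic j) k (fun _ => (2:ℤ))]
    simp
  have e3 : ∑ i ∈ Finset.Iic j, (if i.val = k.val + 1 then (-2:ℤ) else 0)
      = if k.val + 1 ≤ j.val then -2 else 0 := by
    by_cases hk : k.val + 1 < n
    · have : ∀ i : Fin n, i.val = k.val + 1 ↔ i = ⟨k.val+1, hk⟩ := by
        intro i; constructor
        · intro hh; exact Fin.ext hh
        · intro hh; subst hh; rfl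
      rw [Finset.sum_congr rfl (fun i _ => by rw [if_congr (this i) rfl rfl]),
          Finset.sum_ite_eq' (Finset.Iic j) _ (fun _ => (-2:ℤ))]
      simp [Fin.le_def]
    · have h2 : ∀ i ∈ Finset.Iic j, ¬ (i.val = k.val + 1) := by
        intro i _; have := i.isLt; omega
      rw [Finset.sum_congr rfl (fun i hi => by rw [if_neg (h2 i hi)])]
      have : ¬ (k.val + 1 ≤ j.val) := by have := j.isLt; omega
      simp [this]
  rw [e2, e3]
  rcases lt_trichotomy j.val k.val with hlt | heq | hgt
  · have c1 : ¬ (k ≤ j) := by rw [Fin.le_def]; omega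
    have c2 : ¬ (k.val + 1 ≤ j.val) := by omega
    have c3 : ¬ (j = k) := by intro h; subst h; omega
    rw [if_neg c1, if_neg c2, if_neg c3]; ring
  · have c1 : (k ≤ j) := by rw [Fin.le_def]; omega
    have c2 : ¬ (k.val + 1 ≤ j.val) := by omega
    have c3 : j = k := Fin.ext heq
    rw [if_pos c1, if_neg c2, if_pos c3]; ring
  · have c1 : (k ≤ j) := by rw [Fin.le_def]; omega
    have c2 : (k.val + 1 ≤ j.val) := by omega
    have c3 : ¬ (j = k) := by intro h; subst h; omega
    rw [if_pos c1, if_pos c2, if_neg c3]; ring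

lemma cb_downF {k : Fin n} {b : Fin n → Bool} (h : canDown k b) (j : Fin n) :
    cb (downF k b) j = cb b j - (if j = k then 2 else 0) := by
  have h2 := cb_upF (canUp_downF k b) j
  rw [upF_downF h] at h2
  omega




lemma upF_untouched {k i : Fin n} (h1 : i ≠ k) (h2 : i.val ≠ k.val + 1) (b : Fin n → Bool) :
    upF k b i = b i := by simp [upF, h1, h2]
lemma downF_untouched {k i : Fin n} (h1 : i ≠ k) (h2 : i.val ≠ k.val + 1) (b : Fin n → Bool) :
    downF k b i = b i := by simp [downF, h1, h2]

lemma canUp_far {j k : Fin n} (hfar : j.val + 1 < k.val ∨ k.val + 1 < j.val) (b : Fin n → Bool) :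
    canUp j (downF k b) ↔ canUp j b := by
  have e1 : downF k b j = b j := downF_untouched (by intro h; subst h; omega) (by omega) b
  constructor
  · rintro ⟨h1, h2⟩
    refine ⟨by rwa [e1] at h1, fun i hi => ?_⟩
    have := h2 i hi
    rwa [downF_untouched (by intro h; subst h; omega) (by omega) b] at this
  · rintro ⟨h1, h2⟩
    refine ⟨by rwa [e1], fun i hi => ?_⟩
    rw [downF_untouched (by intro h; subst h; omega) (by omega) b]
    exact h2 i hi

lemma canDown_far {j k : Fin n} (hfar : j.val + 1 < k.val ∨ k.val + 1 < j.val) (b : Fin n → Bool) :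
    canDown k (upF j b) ↔ canDown k b := by
  have e1 : upF j b k = b k := upF_untouched (by intro h; subst h; omega) (by omega) b
  constructor
  · rintro ⟨h1, h2⟩
    refine ⟨by rwa [e1] at h1, fun i hi => ?_⟩
    have := h2 i hi
    rwa [upF_untouched (by intro h; subst h; omega) (by omega) b] at this
  · rintro ⟨h1, h2⟩
    refine ⟨by rwa [e1], fun i hi => ?_⟩
    rw [upF_untouched (by intro h; subst h; omega) (by omega) b]
    exact h2 i hi

lemma swap_far {j k : Fin n} (hfar : j.val + 1 < k.val ∨ k.val + 1 < j.val) (b : Fin n → Bool) :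
    upF j (downF k b) = downF k (upF j b) := by
  funext i
  by_cases c1 : i = j
  · subst c1; simp [upF, downF]; omega
  · by_cases c2 : i.val = j.val + 1
    · have d1 : i ≠ k := by intro h; subst h; omega
      have d2 : i.val ≠ k.val + 1 := by omega
      simp [upF, downF, c1, c2, d1, d2]
      omega
    · by_cases c3 : i = k
      · subst c3
        have d2 : i.val ≠ j.val + 1 := by omega
        simp [upF, downF, c1, d2]
      · by_cases c4 : i.val = k.val + 1
        · simp [upF, downF, c1, c2, c3, c4]
          omega
        · simp [upF, downF, c1, c2, c3, c4]

/-- the key exchange lemma for distinct positions -/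
lemma exchange {j k : Fin n} (hne : j ≠ k) (w : Fin n → Bool) :
    ((canDown k w ∧ canUp j (downF k w)) ↔ (canUp j w ∧ canDown k (upF j w)))
    ∧ ((canDown k w ∧ canUp j (downF k w)) → upF j (downF k w) = downF k (upF j w)) := by
  have hne' : j.val ≠ k.val := fun h => hne (Fin.ext h)
  rcases (by omega : j.val + 1 = k.val ∨ k.val + 1 = j.val ∨ (j.val + 1 < k.val ∨ k.val + 1 < j.val)) with hadj | hadj | hfar
  · -- j + 1 = k : both sides false
    constructor
    · constructor
      · rintro ⟨_, _, h2⟩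
        have := h2 k hadj.symm
        simp [downF] at this
      · rintro ⟨_, h1, _⟩
        have hk : (upF j w) k = false := by
          have : k ≠ j := hne.symm
          simp [upF, this, hadj.symm]
        rw [hk] at h1; exact absurd h1 (by simp)
    · rintro ⟨_, _, h2⟩
      have := h2 k hadj.symm
      simp [downF] at this
  · -- k + 1 = j : both sides false
    constructor
    · constructor
      · rintro ⟨_, h1, _⟩
        have : (downF k w) j = true := by simp [downF, hne, hadj.symm]
        rw [this] at h1; exact absurd h1 (by simp)
      · rintro ⟨_, _, h2⟩
        have := h2 j hadj.symm
        simp [upF] at this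
    · rintro ⟨_, h1, _⟩
      have : (downF k w) j = true := by simp [downF, hne, hadj.symm]
      rw [this] at h1; exact absurd h1 (by simp)
  · -- far case
    constructor
    · rw [canUp_far hfar, canDown_far hfar]; tauto
    · intro _; exact swap_far hfar w




/-- coefficients of the raising operator -/
def Pc (n : ℕ) (k : Fin n) : ℚ :=
  if k.val + 1 = n then (n * (n+1)) / 2 else ((k.val:ℚ) + 1) * (2 * n - k.val)

lemma wtb_eq_sum (w : Fin n → Bool) :
    wtb w = ∑ k : Fin n, ((n:ℤ) - k.val) * val w k := by
  unfold wtb cb cum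
  rw [Finset.sum_comm' (s := Finset.univ) (t' := Finset.univ)
    (t := fun k => Finset.Iic k) (s' := fun i => Finset.Ici i)
    (by intro i k; simp [Finset.mem_Iic, Finset.mem_Ici])]
  apply Finset.sum_congr rfl
  intro i _
  rw [Finset.sum_const, Fin.card_Ici]
  have : ((n - i.val : ℕ) : ℤ) = (n:ℤ) - i.val := by have := i.isLt; omega
  simp [this]

/-- the diagonal identity -/
lemma diag_identity (w : Fin n → Bool) :
    ∑ k : Fin n, ((if canDown k w then Pc n k else 0) - (if canUp k w then Pc n k else 0))
      = (wtb w : ℚ) := by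
  -- express per-index terms via x values
  set x : ℕ → ℚ := fun m => if h : m < n then (val w ⟨m, h⟩ : ℚ) else 0 with hx
  set t : ℕ → ℚ := fun m => if h : m < n then
      ((if canDown ⟨m,h⟩ w then Pc n ⟨m,h⟩ else 0) - (if canUp ⟨m,h⟩ w then Pc n ⟨m,h⟩ else 0))
    else 0 with ht
  have key : ∀ m < n, t m = (if m + 1 = n then (↑n * (↑n+1))/2 * x m
      else ((m:ℚ)+1) * (2*n - m) * (x m - x (m+1)) / 2) := by
    intro m hm
    have hxm : x m = (val w ⟨m, hm⟩ : ℚ) := by rw [hx]; simp [hm]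
    by_cases hlast : m + 1 = n
    · -- last position: canDown ↔ w = true, canUp ↔ w = false
      have hcd : canDown ⟨m,hm⟩ w ↔ w ⟨m,hm⟩ = true := by
        unfold canDown
        constructor
        · exact fun h => h.1
        · intro h; exact ⟨h, fun j hj => absurd (hj ▸ j.isLt) (by simp; omega)⟩
      have hcu : canUp ⟨m,hm⟩ w ↔ w ⟨m,hm⟩ = false := by
        unfold canUp
        constructor
        · exact fun h => h.1
        · intro h; exact ⟨h, fun j hj => absurd (hj ▸ j.isLt) (by simp; omega)⟩
      rw [ht]
      simp only [hm, dif_pos, hlast, if_pos]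
      unfold Pc
      cases hw : w ⟨m, hm⟩ <;>
        simp [hcd, hcu, hw, hlast, hxm, val, ← Fin.val_eq_val] <;> ring
    · have hm1 : m + 1 < n := by omega
      have hxm1 : x (m+1) = (val w ⟨m+1, hm1⟩ : ℚ) := by rw [hx]; simp [hm1]
      have hcd : canDown ⟨m,hm⟩ w ↔ (w ⟨m,hm⟩ = true ∧ w ⟨m+1,hm1⟩ = false) := by
        unfold canDown
        constructor
        · intro h; exact ⟨h.1, h.2 ⟨m+1,hm1⟩ rfl⟩
        · rintro ⟨h1, h2⟩
          refine ⟨h1, fun j hj => ?_⟩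
          have : j = ⟨m+1, hm1⟩ := Fin.ext hj
          rwa [this]
      have hcu : canUp ⟨m,hm⟩ w ↔ (w ⟨m,hm⟩ = false ∧ w ⟨m+1,hm1⟩ = true) := by
        unfold canUp
        constructor
        · intro h; exact ⟨h.1, h.2 ⟨m+1,hm1⟩ rfl⟩
        · rintro ⟨h1, h2⟩
          refine ⟨h1, fun j hj => ?_⟩
          have : j = ⟨m+1, hm1⟩ := Fin.ext hj
          rwa [this]
      rw [ht]
      simp only [hm, dif_pos, hlast, if_neg, ite_false]
      unfold Pc
      have : ¬ (m + 1 = n) := hlast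
      cases hw : w ⟨m, hm⟩ <;> cases hw1 : w ⟨m+1, hm1⟩ <;>
        simp [hcd, hcu, hw, hw1, this, hxm, hxm1, val, ← Fin.val_eq_val] <;> ring
  -- the telescoping potential
  set u : ℕ → ℚ := fun m => (m : ℚ) * (2*n - m + 1) / 2 * x m with hu
  have tele : ∀ m < n, t m - ((n:ℚ) - m) * x m = u m - u (m+1) := by
    intro m hm
    rw [key m hm]
    by_cases hlast : m + 1 = n
    · rw [if_pos hlast]
      have hx1 : x (m+1) = 0 := by rw [hx]; simp [hlast]
      have hmc : (m : ℚ) = (n : ℚ) - 1 := by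
        have : (m : ℚ) + 1 = n := by exact_mod_cast congrArg (Nat.cast : ℕ → ℚ) hlast
        linarith
      simp only [hu]
      rw [hx1, hmc]; push_cast; ring
    · rw [if_neg hlast]
      simp only [hu]
      push_cast
      ring
  have sum_eq : ∑ m ∈ Finset.range n, (t m - ((n:ℚ) - m) * x m) = 0 := by
    rw [Finset.sum_congr rfl (fun m hm => tele m (Finset.mem_range.mp hm))]
    rw [Finset.sum_range_sub' u n]
    have h0 : u 0 = 0 := by rw [hu]; simp
    have hn' : u n = 0 := by rw [hu, hx]; simp
    rw [h0, hn']; ring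
  have lhs_eq : ∑ k : Fin n, ((if canDown k w then Pc n k else 0) - (if canUp k w then Pc n k else 0))
      = ∑ m ∈ Finset.range n, t m := by
    rw [← Fin.sum_univ_eq_sum_range t n]
    apply Finset.sum_congr rfl
    intro k _
    rw [ht]
    simp [k.isLt]
  have rhs_eq : (wtb w : ℚ) = ∑ m ∈ Finset.range n, ((n:ℚ) - m) * x m := by
    rw [wtb_eq_sum]
    push_cast
    rw [← Fin.sum_univ_eq_sum_range (fun m => ((n:ℚ) - m) * x m) n]
    apply Finset.sum_congr rfl
    intro k _
    rw [hx]
    simp [k.isLt]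
  rw [lhs_eq, rhs_eq]
  have := sum_eq
  rw [Finset.sum_sub_distrib] at this
  linarith


/-! ### The raising and lowering operators -/

def Eop (f : (Fin n → Bool) → ℚ) : (Fin n → Bool) → ℚ :=
  fun w => ∑ k, if canDown k w then Pc n k * f (downF k w) else 0

def Fop (f : (Fin n → Bool) → ℚ) : (Fin n → Bool) → ℚ :=
  fun w => ∑ k, if canUp k w then f (upF k w) else 0

lemma sum_split_at (k : Fin n) (g : Fin n → ℚ) :
    ∑ j, g j = g k + ∑ j, (if j ≠ k then g j else 0) := by
  have h1 : ∀ j : Fin n, g j = (if j = k then g j else 0) + (if j ≠ k then g j else 0) := by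
    intro j
    by_cases h : j = k
    · rw [if_pos h, if_neg (by tauto)]; ring
    · rw [if_neg h, if_pos h]; ring
  rw [Finset.sum_congr rfl (fun j _ => h1 j), Finset.sum_add_distrib,
      Finset.sum_ite_eq' Finset.univ k g, if_pos (Finset.mem_univ k)]

lemma comm_EF (f : (Fin n → Bool) → ℚ) (w : Fin n → Bool) :
    Eop (Fop f) w - Fop (Eop f) w = (wtb w : ℚ) * f w := by
  have hA : Eop (Fop f) w = ∑ k : Fin n, ∑ j : Fin n,
      (if canDown k w ∧ canUp j (downF k w) then Pc n k * f (upF j (downF k w)) else 0) := by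
    unfold Eop Fop
    apply Finset.sum_congr rfl
    intro k _
    by_cases h : canDown k w
    · rw [if_pos h, Finset.mul_sum]
      apply Finset.sum_congr rfl
      intro j _
      by_cases h2 : canUp j (downF k w)
      · rw [if_pos h2, if_pos ⟨h, h2⟩]
      · rw [if_neg h2, if_neg (by tauto), mul_zero]
    · rw [if_neg h]
      symm
      apply Finset.sum_eq_zero
      intro j _
      rw [if_neg (by tauto)]
  have hB : Fop (Eop f) w = ∑ k : Fin n, ∑ j : Fin n,
      (if canUp j w ∧ canDown k (upF j w) then Pc n k * f (downF k (upF j w)) else 0) := by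
    unfold Eop Fop
    rw [Finset.sum_comm]
    apply Finset.sum_congr rfl
    intro j _
    by_cases h : canUp j w
    · rw [if_pos h]
      apply Finset.sum_congr rfl
      intro k _
      by_cases h2 : canDown k (upF j w)
      · rw [if_pos h2, if_pos ⟨h, h2⟩]
      · rw [if_neg h2, if_neg (by tauto)]
    · rw [if_neg h]
      symm
      apply Finset.sum_eq_zero
      intro k _
      rw [if_neg (by tauto)]
  rw [hA, hB, ← Finset.sum_sub_distrib]
  have hdiag : ∀ k : Fin n,
      (∑ j : Fin n, (if canDown k w ∧ canUp j (downF k w) then Pc n k * f (upF j (downF k w)) else 0))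
      - (∑ j : Fin n, (if canUp j w ∧ canDown k (upF j w) then Pc n k * f (downF k (upF j w)) else 0))
      = (if canDown k w then Pc n k * f w else 0) - (if canUp k w then Pc n k * f w else 0) := by
    intro k
    have e1 : ∑ j : Fin n, (if canDown k w ∧ canUp j (downF k w) then Pc n k * f (upF j (downF k w)) else 0)
        = (if canDown k w then Pc n k * f w else 0)
          + ∑ j : Fin n, (if j ≠ k ∧ canDown k w ∧ canUp j (downF k w) then Pc n k * f (upF j (downF k w)) else 0) := by
      rw [sum_split_at k]
      congr 1
      · by_cases h : canDown k w
        · rw [if_pos ⟨h, canUp_downF k w⟩, if_pos h, upF_downF h]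
        · rw [if_neg (by tauto), if_neg h]
      · apply Finset.sum_congr rfl
        intro j _
        by_cases hj : j = k
        · rw [if_neg (by tauto), if_neg (by tauto)]
        · rw [if_pos hj]
          by_cases h2 : canDown k w ∧ canUp j (downF k w)
          · rw [if_pos h2, if_pos ⟨hj, h2⟩]
          · rw [if_neg h2, if_neg (by tauto)]
    have e2 : ∑ j : Fin n, (if canUp j w ∧ canDown k (upF j w) then Pc n k * f (downF k (upF j w)) else 0)
        = (if canUp k w then Pc n k * f w else 0)
          + ∑ j : Fin n, (if j ≠ k ∧ canUp j w ∧ canDown k (upF j w) then Pc n k * f (downF k (upF j w)) else 0) := by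
      rw [sum_split_at k]
      congr 1
      · by_cases h : canUp k w
        · rw [if_pos ⟨h, canDown_upF k w⟩, if_pos h, downF_upF h]
        · rw [if_neg (by tauto), if_neg h]
      · apply Finset.sum_congr rfl
        intro j _
        by_cases hj : j = k
        · rw [if_neg (by tauto), if_neg (by tauto)]
        · rw [if_pos hj]
          by_cases h2 : canUp j w ∧ canDown k (upF j w)
          · rw [if_pos h2, if_pos ⟨hj, h2⟩]
          · rw [if_neg h2, if_neg (by tauto)]
    rw [e1, e2]
    have e3 : ∀ j : Fin n,
        (if j ≠ k ∧ canDown k w ∧ canUp j (downF k w) then Pc n k * f (upF j (downF k w)) else 0)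
        = (if j ≠ k ∧ canUp j w ∧ canDown k (upF j w) then Pc n k * f (downF k (upF j w)) else 0) := by
      intro j
      by_cases hj : j = k
      · rw [if_neg (by tauto), if_neg (by tauto)]
      · obtain ⟨hiff, heq⟩ := exchange hj w
        by_cases h2 : canDown k w ∧ canUp j (downF k w)
        · rw [if_pos ⟨hj, h2⟩, if_pos ⟨hj, hiff.mp h2⟩, heq h2]
        · rw [if_neg (by tauto), if_neg (by rw [← hiff] at *; tauto)]
    rw [Finset.sum_congr rfl (fun j _ => e3 j)]
    ring
  rw [Finset.sum_congr rfl (fun k _ => hdiag k)]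
  have e4 : ∀ k : Fin n,
      (if canDown k w then Pc n k * f w else 0) - (if canUp k w then Pc n k * f w else 0)
      = ((if canDown k w then Pc n k else 0) - (if canUp k w then Pc n k else 0)) * f w := by
    intro k
    split_ifs <;> ring
  rw [Finset.sum_congr rfl (fun k _ => e4 k), ← Finset.sum_mul, diag_identity w]




/-! ### sl2 theory: injectivity of the raising operator on negative levels -/

/-- support of f lies in level `l` -/
def IsLvl (f : (Fin n → Bool) → ℚ) (l : ℤ) : Prop := ∀ b, f b ≠ 0 → wtb b = l

lemma wtb_upF {k : Fin n} {b : Fin n → Bool} (h : canUp k b) : wtb (upF k b) = wtb b + 2 := by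
  unfold wtb
  rw [Finset.sum_congr rfl (fun j _ => cb_upF h j), Finset.sum_add_distrib,
      Finset.sum_ite_eq' Finset.univ k (fun _ => (2:ℤ)), if_pos (Finset.mem_univ k)]

lemma wtb_downF {k : Fin n} {b : Fin n → Bool} (h : canDown k b) : wtb (downF k b) = wtb b - 2 := by
  have h2 := wtb_upF (canUp_downF k b)
  rw [upF_downF h] at h2
  omega

lemma lvl_Fop {f : (Fin n → Bool) → ℚ} {l : ℤ} (h : IsLvl f l) : IsLvl (Fop f) (l - 2) := by
  intro w hw
  unfold Fop at hw
  obtain ⟨k, _, hk⟩ := Finset.exists_ne_zero_of_sum_ne_zero hw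
  by_cases hcu : canUp k w
  · rw [if_pos hcu] at hk
    have := h _ hk
    have h2 := wtb_upF hcu
    omega
  · rw [if_neg hcu] at hk; exact absurd rfl hk

lemma lvl_Eop {f : (Fin n → Bool) → ℚ} {l : ℤ} (h : IsLvl f l) : IsLvl (Eop f) (l + 2) := by
  intro w hw
  unfold Eop at hw
  obtain ⟨k, _, hk⟩ := Finset.exists_ne_zero_of_sum_ne_zero hw
  by_cases hcd : canDown k w
  · rw [if_pos hcd] at hk
    have hfne : f (downF k w) ≠ 0 := by
      intro h0; rw [h0, mul_zero] at hk; exact hk rfl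
    have := h _ hfne
    have h2 := wtb_downF hcd
    omega
  · rw [if_neg hcd] at hk; exact absurd rfl hk

lemma Fop_mul (c : ℚ) (f : (Fin n → Bool) → ℚ) :
    Fop (fun b => c * f b) = fun w => c * Fop f w := by
  funext w
  unfold Fop
  rw [Finset.mul_sum]
  apply Finset.sum_congr rfl
  intro k _
  split_ifs <;> ring

lemma Eop_zero : Eop (n := n) (fun _ => 0) = fun _ => 0 := by
  funext w
  unfold Eop
  apply Finset.sum_eq_zero
  intro k _
  split_ifs <;> ring

lemma lvl_iter_Fop {f : (Fin n → Bool) → ℚ} {l : ℤ} (h : IsLvl f l) (m : ℕ) :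
    IsLvl (Fop^[m] f) (l - 2 * m) := by
  induction m with
  | zero => simpa using h
  | succ m ih =>
      rw [Function.iterate_succ_apply']
      have := lvl_Fop ih
      have e : l - 2 * (m+1 : ℕ) = l - 2 * m - 2 := by push_cast; ring
      rwa [e]

lemma lvl_vanish {f : (Fin n → Bool) → ℚ} {l : ℤ} (h : IsLvl f l) (hl : l < -(n*n : ℤ)) :
    f = fun _ => 0 := by
  funext b
  by_contra hb
  have := h b hb
  have := wtb_lower b
  omega

/-- key commutation: E F^[k+1] = (k+1)(l-k) • F^[k]  on level-l kernel vectors of E -/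
lemma EFk {f : (Fin n → Bool) → ℚ} {l : ℤ} (hf : IsLvl f l) (hE : Eop f = fun _ => 0) :
    ∀ k : ℕ, Eop (Fop^[k+1] f) = fun w => (((k:ℚ)+1) * ((l:ℚ) - k)) * (Fop^[k] f) w := by
  intro k
  induction k with
  | zero =>
      have hF0 : Fop (n := n) (fun _ => 0) = fun _ => 0 := by
        funext w'
        unfold Fop
        apply Finset.sum_eq_zero
        intro k _
        split_ifs <;> rfl
      funext w
      have hc := comm_EF f w
      rw [hE, hF0] at hc
      have hbeta : (fun (_ : Fin n → Bool) => (0:ℚ)) w = 0 := rfl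
      rw [hbeta, sub_zero] at hc
      have hlf : (wtb w : ℚ) * f w = (l : ℚ) * f w := by
        by_cases h0 : f w = 0
        · rw [h0]; ring
        · rw [hf w h0]
      simp only [zero_add, Function.iterate_one, Function.iterate_zero, id_eq, Nat.cast_zero]
      rw [hc, hlf]
      ring
  | succ k ih =>
      funext w
      have hlv : IsLvl (Fop^[k+1] f) (l - 2*(k+1 : ℕ)) := lvl_iter_Fop hf (k+1)
      have hc := comm_EF (Fop^[k+1] f) w
      rw [Function.iterate_succ_apply']
      -- Eop (Fop g) w = Fop (Eop g) w + wtb w * g w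
      have hEg : Eop (Fop^[k+1] f) = fun w => (((k:ℚ)+1) * ((l:ℚ) - k)) * (Fop^[k] f) w := ih
      have h2 : Fop (Eop (Fop^[k+1] f)) = fun w => (((k:ℚ)+1) * ((l:ℚ) - k)) * (Fop^[k+1] f) w := by
        rw [hEg, Fop_mul]
        funext w'
        rw [Function.iterate_succ_apply']
      have h3 : (wtb w : ℚ) * (Fop^[k+1] f) w = ((l:ℚ) - 2*((k:ℚ)+1)) * (Fop^[k+1] f) w := by
        by_cases h0 : (Fop^[k+1] f) w = 0
        · rw [h0]; ring
        · rw [hlv w h0]; push_cast; ring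
      have : Eop (Fop (Fop^[k+1] f)) w = Fop (Eop (Fop^[k+1] f)) w + (wtb w : ℚ) * (Fop^[k+1] f) w := by
        linarith [hc]
      rw [this, h2, h3]
      push_cast
      ring

lemma E_inj_neg {f : (Fin n → Bool) → ℚ} {l : ℤ} (hf : IsLvl f l) (hneg : l < 0)
    (hE : Eop f = fun _ => 0) : f = fun _ => 0 := by
  have main : ∀ m : ℕ, Fop^[m] f = (fun _ => 0) → f = fun _ => 0 := by
    intro m
    induction m with
    | zero => intro h; simpa using h
    | succ m ih =>
        intro h
        apply ih
        have h1 := EFk hf hE m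
        rw [h, Eop_zero] at h1
        funext w
        have := congrFun h1.symm w
        have hcoef : ((m:ℚ)+1) * ((l:ℚ) - m) ≠ 0 := by
          apply mul_ne_zero
          · positivity
          · have h5 : (l:ℚ) < 0 := by exact_mod_cast hneg
            have h6 : (0:ℚ) ≤ m := Nat.cast_nonneg m
            intro hcon
            nlinarith [hcon]
        exact (mul_eq_zero.mp this).resolve_left hcoef
  apply main (n*n + 1)
  apply lvl_vanish (lvl_iter_Fop hf (n*n+1))
  have ht : (0:ℤ) ≤ (n:ℤ)*(n:ℤ) := by positivity
  push_cast
  omega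



/-! ### From injectivity to a matching, via Hall's theorem -/

lemma pleB_upF {k : Fin n} {b : Fin n → Bool} (h : canUp k b) : pleB b (upF k b) := by
  intro j
  show cb b j ≤ cb (upF k b) j
  rw [cb_upF h j]
  split_ifs <;> omega

/-- up-neighbours of b -/
def nbrs (b : Fin n → Bool) : Finset (Fin n → Bool) :=
  (Finset.univ.filter (fun k => canUp k b)).image (fun k => upF k b)

lemma mem_nbrs {b w : Fin n → Bool} : w ∈ nbrs b ↔ ∃ k, canUp k b ∧ w = upF k b := by
  unfold nbrs
  simp only [Finset.mem_image, Finset.mem_filter, Finset.mem_univ, true_and]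
  constructor
  · rintro ⟨k, h1, h2⟩; exact ⟨k, h1, h2.symm⟩
  · rintro ⟨k, h1, h2⟩; exact ⟨k, h1, h2.symm⟩

lemma Eop_ext_add (f g : (Fin n → Bool) → ℚ) :
    Eop (fun b => f b + g b) = fun w => Eop f w + Eop g w := by
  funext w
  unfold Eop
  rw [← Finset.sum_add_distrib]
  apply Finset.sum_congr rfl
  intro k _
  split_ifs <;> ring

lemma Eop_ext_smul (c : ℚ) (f : (Fin n → Bool) → ℚ) :
    Eop (fun b => c * f b) = fun w => c * Eop f w := by
  funext w
  unfold Eop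
  rw [Finset.mul_sum]
  apply Finset.sum_congr rfl
  intro k _
  split_ifs <;> ring

lemma hall_bound {l : ℤ} (hl : l < 0) (s : Finset {b : Fin n → Bool // wtb b = l}) :
    s.card ≤ (s.biUnion (fun b => nbrs b.val)).card := by
  classical
  set S : Finset (Fin n → Bool) := s.image Subtype.val with hS
  set T : Finset (Fin n → Bool) := s.biUnion (fun b => nbrs b.val) with hT
  have hcardS : S.card = s.card := Finset.card_image_of_injective s Subtype.val_injective
  -- the extension of x : ↥S → ℚ by zero
  let ext : (↥S → ℚ) → ((Fin n → Bool) → ℚ) :=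
    fun x b => if h : b ∈ S then x ⟨b, h⟩ else 0
  have hlvl : ∀ x, IsLvl (ext x) l := by
    intro x b hb
    by_cases h : b ∈ S
    · rw [hS] at h
      obtain ⟨b', _, rfl⟩ := Finset.mem_image.mp h
      exact b'.property
    · exfalso; apply hb; simp only [ext, dif_neg h]
  -- the linear map
  let M : (↥S → ℚ) →ₗ[ℚ] (↥T → ℚ) := {
    toFun := fun x w => Eop (ext x) w.val
    map_add' := by
      intro x y
      have : ext (x + y) = fun b => ext x b + ext y b := by
        funext b
        by_cases h : b ∈ S <;> simp [ext, h]
      funext w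
      show Eop (ext (x + y)) w.val = Eop (ext x) w.val + Eop (ext y) w.val
      rw [this, Eop_ext_add]
    map_smul' := by
      intro c x
      have : ext (c • x) = fun b => c * ext x b := by
        funext b
        by_cases h : b ∈ S <;> simp [ext, h]
      funext w
      show Eop (ext (c • x)) w.val = c * Eop (ext x) w.val
      rw [this, Eop_ext_smul] }
  have hMinj : Function.Injective M := by
    rw [injective_iff_map_eq_zero]
    intro x hx
    have hE0 : Eop (ext x) = fun _ => 0 := by
      funext w
      by_cases hw : w ∈ T
      · exact congrFun hx ⟨w, hw⟩
      · unfold Eop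
        apply Finset.sum_eq_zero
        intro k _
        by_cases hcd : canDown k w
        · rw [if_pos hcd]
          have : ext x (downF k w) = 0 := by
            by_cases hmem : downF k w ∈ S
            · exfalso
              apply hw
              rw [hT]
              rw [hS] at hmem
              obtain ⟨b', hb', hval⟩ := Finset.mem_image.mp hmem
              apply Finset.mem_biUnion.mpr ⟨b', hb', ?_⟩
              rw [hval, mem_nbrs]
              exact ⟨k, canUp_downF k w, (upF_downF hcd).symm⟩
            · simp only [ext, dif_neg hmem]
          rw [this, mul_zero]
        · rw [if_neg hcd]
    have := E_inj_neg (hlvl x) hl hE0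
    funext b
    have hb := congrFun this b.val
    simp only [ext, dif_pos b.property] at hb
    rw [Subtype.eta] at hb
    exact hb
  have hrk := LinearMap.finrank_le_finrank_of_injective hMinj
  rw [Module.finrank_fintype_fun_eq_card, Module.finrank_fintype_fun_eq_card,
      Fintype.card_coe, Fintype.card_coe] at hrk
  omega

lemma exists_match {l : ℤ} (hl : l < 0) :
    ∃ φ : (Fin n → Bool) → (Fin n → Bool),
      (∀ b b', wtb b = l → wtb b' = l → φ b = φ b' → b = b') ∧
      (∀ b, wtb b = l → wtb (φ b) = l + 2 ∧ pleB b (φ b)) := by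
  classical
  obtain ⟨F, hFinj, hFmem⟩ :=
    (Finset.all_card_le_biUnion_card_iff_exists_injective
      (fun b : {b : Fin n → Bool // wtb b = l} => nbrs b.val)).mp (fun s => hall_bound hl s)
  refine ⟨fun b => if h : wtb b = l then F ⟨b, h⟩ else b, ?_, ?_⟩
  · intro b b' hb hb' heq
    have heq' : F ⟨b, hb⟩ = F ⟨b', hb'⟩ := by
      simpa only [dif_pos hb, dif_pos hb'] using heq
    have := hFinj heq'
    exact congrArg Subtype.val this
  · intro b hb
    simp only [dif_pos hb]
    obtain ⟨k, hk, hup⟩ := mem_nbrs.mp (hFmem ⟨b, hb⟩)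
    constructor
    · rw [hup, wtb_upF hk, hb]
    · rw [hup]; exact pleB_upF hk


/-! ### negation symmetry, the middle level, and the projection map Φ -/

def negB (b : Fin n → Bool) : Fin n → Bool := fun i => !(b i)

lemma negB_negB (b : Fin n → Bool) : negB (negB b) = b := by
  funext i; simp [negB]

lemma val_negB (b : Fin n → Bool) (i : Fin n) : val (negB b) i = -(val b i) := by
  unfold val negB
  cases h : b i <;> simp [h]

lemma cb_negB (b : Fin n → Bool) (k : Fin n) : cb (negB b) k = -(cb b k) := by
  unfold cb cum
  rw [← Finset.sum_neg_distrib]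
  exact Finset.sum_congr rfl (fun i _ => val_negB b i)

lemma wtb_negB (b : Fin n → Bool) : wtb (negB b) = -(wtb b) := by
  unfold wtb
  rw [← Finset.sum_neg_distrib]
  exact Finset.sum_congr rfl (fun k _ => cb_negB b k)

lemma pleB_negB {x y : Fin n → Bool} (h : pleB x y) : pleB (negB y) (negB x) := by
  intro k
  show cb (negB y) k ≤ cb (negB x) k
  rw [cb_negB, cb_negB]
  have := h k
  change cb x k ≤ cb y k at this
  omega

/-- the middle level -/
def lstar (n : ℕ) : ℤ := (@wtb n (fun _ => true)) % 2

lemma lstar_nonneg : 0 ≤ lstar n := Int.emod_nonneg _ (by norm_num)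
lemma lstar_lt_two : lstar n < 2 := Int.emod_lt_of_pos _ (by norm_num)

lemma wtb_mod (b : Fin n → Bool) :
    wtb b % 2 = (∑ k : Fin n, ((k.val:ℤ)+1)) % 2 := by
  unfold wtb
  rw [Finset.sum_int_mod]
  rw [Finset.sum_congr rfl (fun k _ => cb_parity b k)]
  rw [← Finset.sum_int_mod]

lemma wtb_parity (b : Fin n → Bool) : (2:ℤ) ∣ (wtb b - lstar n) := by
  have h1 := wtb_mod b
  have h2 := wtb_mod (fun _ : Fin n => true)
  unfold lstar
  omega

lemma cb_upper (b : Fin n → Bool) (k : Fin n) : cb b k ≤ (n:ℤ) := by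
  unfold cb cum
  calc ∑ i ∈ Finset.Iic k, val b i ≤ ∑ i ∈ Finset.Iic k, (1:ℤ) := by
        apply Finset.sum_le_sum
        intro i _
        unfold val; split <;> omega
  _ = (k.val + 1 : ℤ) := by rw [Finset.sum_const, Fin.card_Iic]; push_cast; ring
  _ ≤ (n:ℤ) := by have := k.isLt; omega

lemma wtb_upper (b : Fin n → Bool) : wtb b ≤ (n*n : ℤ) := by
  unfold wtb
  calc ∑ k, cb b k ≤ ∑ _k : Fin n, (n:ℤ) := Finset.sum_le_sum (fun k _ => cb_upper b k)
  _ = (n*n:ℤ) := by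
      rw [Finset.sum_const, Finset.card_univ, Fintype.card_fin, nsmul_eq_mul]

/-- chosen matching functions for each negative level -/
noncomputable def mfun (l : ℤ) : (Fin n → Bool) → (Fin n → Bool) :=
  if h : l < 0 then Classical.choose (exists_match h) else id

lemma mfun_spec {l : ℤ} (hl : l < 0) :
    (∀ b b' : Fin n → Bool, wtb b = l → wtb b' = l → mfun l b = mfun l b' → b = b') ∧
    (∀ b : Fin n → Bool, wtb b = l → wtb (mfun l b) = l + 2 ∧ pleB b (mfun l b)) := by
  unfold mfun
  rw [dif_pos hl]
  exact Classical.choose_spec (exists_match hl)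

/-- one step towards the middle level -/
noncomputable def Tstep : (Fin n → Bool) → (Fin n → Bool) :=
  fun b =>
    if wtb b < lstar n then mfun (wtb b) b
    else if lstar n < wtb b then negB (mfun (-(wtb b)) (negB b))
    else b

lemma Tstep_below {b : Fin n → Bool} (h : wtb b < lstar n) :
    wtb (Tstep b) = wtb b + 2 ∧ pleB b (Tstep b) := by
  have hneg : wtb b < 0 := by
    have := wtb_parity (n := n) b
    have := lstar_lt_two (n := n)
    omega
  unfold Tstep
  rw [if_pos h]
  exact (mfun_spec hneg).2 b rfl

lemma Tstep_above {b : Fin n → Bool} (h : lstar n < wtb b) :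
    wtb (Tstep b) = wtb b - 2 ∧ pleB (Tstep b) b := by
  have hneg : -(wtb b) < 0 := by
    have := lstar_nonneg (n := n)
    omega
  have hlev : wtb (negB b) = -(wtb b) := wtb_negB b
  unfold Tstep
  rw [if_neg (by omega), if_pos h]
  obtain ⟨h1, h2⟩ := (mfun_spec hneg).2 (negB b) hlev
  constructor
  · rw [wtb_negB, h1]; omega
  · have := pleB_negB h2
    rwa [negB_negB] at this

lemma Tstep_mid {b : Fin n → Bool} (h : wtb b = lstar n) : Tstep b = b := by
  unfold Tstep
  rw [if_neg (by omega), if_neg (by omega)]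

lemma Tstep_inj {b b' : Fin n → Bool} (hw : wtb b = wtb b') (h : Tstep b = Tstep b') : b = b' := by
  rcases lt_trichotomy (wtb b) (lstar n) with hc | hc | hc
  · have hneg : wtb b < 0 := by
      have := wtb_parity (n := n) b
      have := lstar_lt_two (n := n)
      omega
    unfold Tstep at h
    rw [if_pos hc, if_pos (hw ▸ hc), ← hw] at h
    exact (mfun_spec hneg).1 b b' rfl hw.symm h
  · rw [Tstep_mid hc, Tstep_mid (hw ▸ hc)] at h
    exact h
  · have hneg : -(wtb b) < 0 := by
      have := lstar_nonneg (n := n)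
      omega
    unfold Tstep at h
    rw [if_neg (by omega), if_pos hc, if_neg (by omega), if_pos (hw ▸ hc), ← hw] at h
    have h2 := congrArg negB h
    rw [negB_negB, negB_negB] at h2
    have h3 := (mfun_spec hneg).1 (negB b) (negB b') (wtb_negB b) (by rw [wtb_negB, hw]) h2
    have h4 := congrArg negB h3
    rwa [negB_negB, negB_negB] at h4

/-- distance to the middle level -/
def distL (b : Fin n → Bool) : ℕ := (wtb b - lstar n).natAbs

lemma distL_le (b : Fin n → Bool) : distL b ≤ 2*(n*n) + 2 := by
  unfold distL
  have h1 := wtb_upper b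
  have h2 := wtb_lower b
  have h3 := lstar_nonneg (n := n)
  have h4 := lstar_lt_two (n := n)
  have ht : (0:ℤ) ≤ (n:ℤ)*(n:ℤ) := by positivity
  omega

/-- landing: after enough steps we are exactly at the middle level -/
lemma land : ∀ (m : ℕ) (b : Fin n → Bool), distL b ≤ 2*m → wtb (Tstep^[m] b) = lstar n := by
  intro m
  induction m with
  | zero =>
      intro b hb
      unfold distL at hb
      simp only [Function.iterate_zero, id_eq]
      omega
  | succ m ih =>
      intro b hb
      rw [Function.iterate_succ_apply]
      rcases lt_trichotomy (wtb b) (lstar n) with hc | hc | hc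
      · obtain ⟨h1, _⟩ := Tstep_below hc
        apply ih
        unfold distL at hb ⊢
        have := wtb_parity (n := n) b
        omega
      · rw [Tstep_mid hc]
        apply ih
        unfold distL
        omega
      · obtain ⟨h1, _⟩ := Tstep_above hc
        apply ih
        unfold distL at hb ⊢
        have := wtb_parity (n := n) b
        omega

/-- the projection to the middle level -/
noncomputable def Phi : (Fin n → Bool) → (Fin n → Bool) := Tstep^[n*n + 1]

lemma wtb_Phi (b : Fin n → Bool) : wtb (Phi b) = lstar n := by
  apply land
  have := distL_le b
  omega

lemma Phi_mid {b : Fin n → Bool} (h : wtb b = lstar n) : Phi b = b := by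
  unfold Phi
  have : ∀ j, Tstep^[j] b = b := by
    intro j
    induction j with
    | zero => rfl
    | succ j ih => rw [Function.iterate_succ_apply', ih, Tstep_mid h]
  exact this _

lemma Phi_Tstep (b : Fin n → Bool) : Phi (Tstep b) = Phi b := by
  have h1 : Phi (Tstep b) = Tstep (Phi b) := by
    unfold Phi
    rw [← Function.iterate_succ_apply]
    rw [Function.iterate_succ_apply']
  rw [h1, Tstep_mid (wtb_Phi b)]

lemma Phi_inj_aux : ∀ (m : ℕ) (b b' : Fin n → Bool), distL b ≤ 2*m → wtb b = wtb b' →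
    Tstep^[m] b = Tstep^[m] b' → b = b' := by
  intro m
  induction m with
  | zero =>
      intro b b' _ _ h
      simpa using h
  | succ m ih =>
      intro b b' hb hw h
      rw [Function.iterate_succ_apply, Function.iterate_succ_apply] at h
      rcases eq_or_ne (wtb b) (lstar n) with hc | hc
      · rw [Tstep_mid hc, Tstep_mid (hw ▸ hc)] at h
        exact ih b b' (by unfold distL at *; omega) hw h
      · have hd : distL (Tstep b) ≤ 2*m ∧ wtb (Tstep b) = wtb (Tstep b') := by
          rcases lt_or_gt_of_ne hc with hlt | hgt
          · obtain ⟨h1, _⟩ := Tstep_below hlt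
            obtain ⟨h1', _⟩ := Tstep_below (hw ▸ hlt)
            have := wtb_parity (n := n) b
            unfold distL at hb ⊢
            constructor
            · omega
            · rw [h1, h1', hw]
          · obtain ⟨h1, _⟩ := Tstep_above hgt
            obtain ⟨h1', _⟩ := Tstep_above (hw ▸ hgt)
            have := wtb_parity (n := n) b
            unfold distL at hb ⊢
            constructor
            · omega
            · rw [h1, h1', hw]
        have := ih (Tstep b) (Tstep b') hd.1 hd.2 h
        exact Tstep_inj hw this

lemma Phi_inj {b b' : Fin n → Bool} (hw : wtb b = wtb b') (h : Phi b = Phi b') : b = b' := by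
  apply Phi_inj_aux (n*n+1) b b' _ hw h
  have := distL_le b
  omega

lemma pleB_Phi_below : ∀ (m : ℕ) (b : Fin n → Bool), distL b ≤ 2*m → wtb b ≤ lstar n →
    pleB b (Tstep^[m] b) := by
  intro m
  induction m with
  | zero => intro b _ _; exact pleB_refl b
  | succ m ih =>
      intro b hb hw
      rw [Function.iterate_succ_apply]
      rcases eq_or_lt_of_le hw with hc | hc
      · rw [Tstep_mid hc]
        exact ih b (by unfold distL at *; omega) hw
      · obtain ⟨h1, h2⟩ := Tstep_below hc
        have hpar := wtb_parity (n := n) b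
        refine pleB_trans h2 (ih (Tstep b) ?_ ?_)
        · unfold distL at hb ⊢; omega
        · omega

lemma pleB_Phi_above : ∀ (m : ℕ) (b : Fin n → Bool), distL b ≤ 2*m → lstar n ≤ wtb b →
    pleB (Tstep^[m] b) b := by
  intro m
  induction m with
  | zero => intro b _ _; exact pleB_refl b
  | succ m ih =>
      intro b hb hw
      rw [Function.iterate_succ_apply]
      rcases eq_or_lt_of_le hw with hc | hc
      · rw [Tstep_mid hc.symm]
        exact ih b (by unfold distL at *; omega) hw
      · obtain ⟨h1, h2⟩ := Tstep_above hc
        have hpar := wtb_parity (n := n) b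
        refine pleB_trans (ih (Tstep b) ?_ ?_) h2
        · unfold distL at hb ⊢; omega
        · omega

lemma pleB_Phi_below' {b : Fin n → Bool} (h : wtb b ≤ lstar n) : pleB b (Phi b) := by
  apply pleB_Phi_below
  · have := distL_le b; omega
  · exact h

lemma pleB_Phi_above' {b : Fin n → Bool} (h : lstar n ≤ wtb b) : pleB (Phi b) b := by
  apply pleB_Phi_above
  · have := distL_le b; omega
  · exact h

lemma below_walk : ∀ (j : ℕ) (b y : Fin n → Bool), wtb y ≤ lstar n →
    wtb b + 2*j = wtb y → Phi b = Phi y → pleB b y := by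
  intro j
  induction j with
  | zero =>
      intro b y _ hw h
      have : b = y := Phi_inj (by omega) h
      rw [this]; exact pleB_refl y
  | succ j ih =>
      intro b y hy hw h
      have hblt : wtb b < lstar n := by push_cast at hw; omega
      obtain ⟨h1, h2⟩ := Tstep_below hblt
      refine pleB_trans h2 (ih (Tstep b) y hy ?_ ?_)
      · push_cast at hw ⊢; omega
      · rw [Phi_Tstep, h]

lemma above_walk : ∀ (j : ℕ) (y x : Fin n → Bool), lstar n ≤ wtb x →
    wtb y = wtb x + 2*j → Phi y = Phi x → pleB x y := by
  intro j
  induction j with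
  | zero =>
      intro y x _ hw h
      have : y = x := Phi_inj (by omega) h
      rw [this]; exact pleB_refl x
  | succ j ih =>
      intro y x hx hw h
      have hygt : lstar n < wtb y := by push_cast at hw; omega
      obtain ⟨h1, h2⟩ := Tstep_above hygt
      refine pleB_trans (ih (Tstep y) x hx ?_ ?_) h2
      · push_cast at hw ⊢; omega
      · rw [Phi_Tstep, h]

/-- the key comparability lemma -/
lemma Phi_comparable {x y : Fin n → Bool} (h : Phi x = Phi y) (hne : x ≠ y) :
    pleB x y ∨ pleB y x := by
  have hpx := wtb_parity (n := n) x
  have hpy := wtb_parity (n := n) y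
  rcases lt_trichotomy (wtb x) (wtb y) with hc | hc | hc
  · -- wtb x < wtb y
    by_cases h1 : wtb y ≤ lstar n
    · obtain ⟨d, hd⟩ : ∃ d : ℕ, wtb x + 2*(d:ℤ) = wtb y := by
        refine ⟨(wtb y - wtb x).toNat / 2, ?_⟩
        have : ((wtb y - wtb x).toNat : ℤ) = wtb y - wtb x := Int.toNat_of_nonneg (by omega)
        omega
      exact Or.inl (below_walk d x y h1 (by exact_mod_cast hd) h)
    · by_cases h2 : lstar n ≤ wtb x
      · obtain ⟨d, hd⟩ : ∃ d : ℕ, wtb y = wtb x + 2*(d:ℤ) := by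
          refine ⟨(wtb y - wtb x).toNat / 2, ?_⟩
          have : ((wtb y - wtb x).toNat : ℤ) = wtb y - wtb x := Int.toNat_of_nonneg (by omega)
          omega
        exact Or.inl (above_walk d y x h2 (by exact_mod_cast hd) h.symm)
      · push_neg at h1 h2
        left
        refine pleB_trans (pleB_Phi_below' (le_of_lt h2)) ?_
        rw [h]
        exact pleB_Phi_above' (le_of_lt h1)
  · exact absurd (Phi_inj hc h) hne
  · -- wtb y < wtb x : symmetric
    by_cases h1 : wtb x ≤ lstar n
    · obtain ⟨d, hd⟩ : ∃ d : ℕ, wtb y + 2*(d:ℤ) = wtb x := by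
        refine ⟨(wtb x - wtb y).toNat / 2, ?_⟩
        have : ((wtb x - wtb y).toNat : ℤ) = wtb x - wtb y := Int.toNat_of_nonneg (by omega)
        omega
      exact Or.inr (below_walk d y x h1 (by exact_mod_cast hd) h.symm)
    · by_cases h2 : lstar n ≤ wtb y
      · obtain ⟨d, hd⟩ : ∃ d : ℕ, wtb x = wtb y + 2*(d:ℤ) := by
          refine ⟨(wtb x - wtb y).toNat / 2, ?_⟩
          have : ((wtb x - wtb y).toNat : ℤ) = wtb x - wtb y := Int.toNat_of_nonneg (by omega)
          omega
        exact Or.inr (above_walk d x y h2 (by exact_mod_cast hd) h)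
      · push_neg at h1 h2
        right
        refine pleB_trans (pleB_Phi_below' (le_of_lt h2)) ?_
        rw [← h]
        exact pleB_Phi_above' (le_of_lt h1)


/-! ### final assembly -/

/-- the middle level as a Finset of Bool vectors -/
noncomputable def midLvl (n : ℕ) : Finset (Fin n → Bool) :=
  Finset.univ.filter (fun b => wtb b = lstar n)

/-- the candidate width -/
noncomputable def mwidth (n : ℕ) : ℕ := (midLvl n).card

/-- the middle level as a set of ±1 integer vectors -/
noncomputable def midL (n : ℕ) : Finset (Fin n → ℤ) := (midLvl n).image val

lemma card_midL : (midL n).card = mwidth n :=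
  Finset.card_image_of_injective _ val_injective

lemma mem_midL {v : Fin n → ℤ} :
    v ∈ midL n ↔ ∃ b, wtb b = lstar n ∧ v = val b := by
  unfold midL midLvl
  simp only [Finset.mem_image, Finset.mem_filter, Finset.mem_univ, true_and]
  constructor
  · rintro ⟨b, h1, h2⟩; exact ⟨b, h1, h2.symm⟩
  · rintro ⟨b, h1, h2⟩; exact ⟨b, h1, h2.symm⟩

lemma cum_zero (k : Fin n) : cum (0 : Fin n → ℤ) k = 0 := by
  unfold cum
  simp

/-- elements of the middle level are in Q -/
lemma midL_inQ (hn : 3 ≤ n) {v : Fin n → ℤ} (hv : v ∈ midL n) : inQ v := by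
  obtain ⟨b, hb, rfl⟩ := mem_midL.mp hv
  have hl0 := lstar_nonneg (n := n)
  have hl2 := lstar_lt_two (n := n)
  refine ⟨isPM_val b, ?_, ?_⟩
  · -- ¬ ple (val b) 0
    intro hple
    have hle : ∀ k : Fin n, cb b k ≤ 0 := by
      intro k
      have := hple k
      rwa [cum_zero] at this
    have hstrict : ∀ k : Fin n, k.val % 2 = 0 → cb b k ≤ -1 := by
      intro k hk
      have := cb_parity b k
      have := hle k
      omega
    have h0 : ((⟨0, by omega⟩ : Fin n) : Fin n).val % 2 = 0 := by simp
    have h2 : ((⟨2, by omega⟩ : Fin n) : Fin n).val % 2 = 0 := by simp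
    have hsum : wtb b ≤ -2 := by
      have hsub : ({⟨0, by omega⟩, ⟨2, by omega⟩} : Finset (Fin n)) ⊆ Finset.univ := by
        intro x _; exact Finset.mem_univ x
      have hne : (⟨0, by omega⟩ : Fin n) ≠ (⟨2, by omega⟩ : Fin n) := by
        intro h; have := congrArg Fin.val h; simp at this
      have hneg : ∑ k ∈ ({⟨0, by omega⟩, ⟨2, by omega⟩} : Finset (Fin n)), (-(cb b k))
          ≤ ∑ k : Fin n, (-(cb b k)) := by
        apply Finset.sum_le_sum_of_subset_of_nonneg hsub
        intro k _ _
        have := hle k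
        omega
      rw [Finset.sum_insert (by simp [hne]), Finset.sum_singleton] at hneg
      have huniv : ∑ k : Fin n, (-(cb b k)) = -(wtb b) := by
        unfold wtb
        rw [← Finset.sum_neg_distrib]
      rw [huniv] at hneg
      have g1 := hstrict ⟨0, by omega⟩ h0
      have g2 := hstrict ⟨2, by omega⟩ h2
      omega
    omega
  · -- ¬ ple 0 (val b)
    intro hple
    have hle : ∀ k : Fin n, 0 ≤ cb b k := by
      intro k
      have := hple k
      rwa [cum_zero] at this
    have hstrict : ∀ k : Fin n, k.val % 2 = 0 → 1 ≤ cb b k := by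
      intro k hk
      have := cb_parity b k
      have := hle k
      omega
    have h0 : ((⟨0, by omega⟩ : Fin n) : Fin n).val % 2 = 0 := by simp
    have h2 : ((⟨2, by omega⟩ : Fin n) : Fin n).val % 2 = 0 := by simp
    have hsum : 2 ≤ wtb b := by
      have hsub : ({⟨0, by omega⟩, ⟨2, by omega⟩} : Finset (Fin n)) ⊆ Finset.univ := by
        intro x _; exact Finset.mem_univ x
      have hne : (⟨0, by omega⟩ : Fin n) ≠ (⟨2, by omega⟩ : Fin n) := by
        intro h; have := congrArg Fin.val h; simp at this
      have : ∑ k ∈ ({⟨0, by omega⟩, ⟨2, by omega⟩} : Finset (Fin n)), cb b k ≤ wtb b := by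
        unfold wtb
        apply Finset.sum_le_sum_of_subset_of_nonneg hsub
        intro k _ _
        exact hle k
      rw [Finset.sum_insert (by simp [hne]), Finset.sum_singleton] at this
      have g1 := hstrict ⟨0, by omega⟩ h0
      have g2 := hstrict ⟨2, by omega⟩ h2
      omega
    omega

/-- the middle level is an antichain -/
lemma midL_antichain : IsAntichain ple ((midL n : Finset (Fin n → ℤ)) : Set (Fin n → ℤ)) := by
  intro x hx y hy hne hple
  obtain ⟨a, ha, rfl⟩ := mem_midL.mp (Finset.mem_coe.mp hx)
  obtain ⟨b, hb, rfl⟩ := mem_midL.mp (Finset.mem_coe.mp hy)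
  have hle : ∀ k ∈ Finset.univ, cb a k ≤ cb b k := fun k _ => hple k
  have hsum : ∑ k, cb a k = ∑ k, cb b k := by
    show wtb a = wtb b
    rw [ha, hb]
  have hall := (Finset.sum_eq_sum_iff_of_le hle).mp hsum
  have : val a = val b := by
    apply cum_inj
    intro k
    show cb a k = cb b k
    exact hall k (Finset.mem_univ k)
  exact hne this

/-- every ±1 antichain has size at most the middle level -/
lemma antichain_le (A : Finset (Fin n → ℤ)) (hPM : ∀ v ∈ A, isPM v)
    (hAC : IsAntichain ple (A : Set (Fin n → ℤ))) : A.card ≤ mwidth n := by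
  classical
  have hinj : Set.InjOn (fun v => Phi (toB v)) (A : Set (Fin n → ℤ)) := by
    intro u hu v hv heq
    by_contra hne
    have hbu : val (toB u) = u := val_toB (hPM u hu)
    have hbv : val (toB v) = v := val_toB (hPM v hv)
    have hbne : toB u ≠ toB v := by
      intro h
      apply hne
      rw [← hbu, ← hbv, h]
    rcases Phi_comparable heq hbne with h | h
    · exact hAC (Finset.mem_coe.mpr hu) (Finset.mem_coe.mpr hv) hne (by
        unfold pleB at h
        rwa [hbu, hbv] at h)
    · exact hAC (Finset.mem_coe.mpr hv) (Finset.mem_coe.mpr hu) (Ne.symm hne) (by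
        unfold pleB at h
        rwa [hbu, hbv] at h)
  have hcard : A.card = (A.image (fun v => Phi (toB v))).card :=
    (Finset.card_image_of_injOn hinj).symm
  rw [hcard]
  apply Finset.card_le_card
  intro w hw
  obtain ⟨v, _, rfl⟩ := Finset.mem_image.mp hw
  unfold midLvl
  simp only [Finset.mem_filter, Finset.mem_univ, true_and]
  exact wtb_Phi (toB v)

end S4X


theorem stmt4 {n : ℕ} (hn : 3 ≤ n) :
    ∃ m : ℕ,
      IsGreatest {k | ∃ A : Finset (Fin n → ℤ),
        (∀ v ∈ A, inQ v) ∧ IsAntichain ple (A : Set (Fin n → ℤ)) ∧ A.card = k} m ∧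
      IsGreatest {k | ∃ A : Finset (Fin n → ℤ),
        (∀ v ∈ A, isPM v) ∧ IsAntichain ple (A : Set (Fin n → ℤ)) ∧ A.card = k} m := by
  refine ⟨S4X.mwidth n, ⟨⟨S4X.midL n, fun v hv => S4X.midL_inQ hn hv,
      S4X.midL_antichain, S4X.card_midL⟩, ?_⟩,
    ⟨⟨S4X.midL n, fun v hv => (S4X.midL_inQ hn hv).1, S4X.midL_antichain, S4X.card_midL⟩, ?_⟩⟩
  · rintro k ⟨A, hQ, hAC, rfl⟩
    exact S4X.antichain_le A (fun v hv => (hQ v hv).1) hAC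
  · rintro k ⟨A, hPM, hAC, rfl⟩
    exact S4X.antichain_le A hPM hAC
end

section
/- For n ≥ 1, the cardinality of Q(n) equals 2^n − 2·binomial(n, ⌊n/2⌋). -/
open Finset

/-! A vector `v ∈ P(n)` satisfies `0 ⪯ v` exactly when the walk of its partial sums never goes
below `0`, and `v ⪯ 0` exactly when `-v` does; for `n ≥ 1` both cannot hold since `v₁ = ±1`.
Hence `|Q(n)| = 2^n - 2 N(n, 0)`, where `N(n, h)` counts walks of length `n` started at height `h`
that stay nonnegative. Splitting off the first step gives `N(n+1, 0) = N(n, 1)` and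
`N(n+1, h+1) = N(n, h+2) + N(n, h)`. By the reflection principle, `N(n, h)` is the number of
walks ending at a height in `[0, 2h+1]`, a sum of binomial coefficients over a window that
satisfies the same recursion by Pascal's rule; for `h = 0` the window is the single middle
coefficient. -/

theorem sum_range_ite_choose_succ (n : ℕ) (p : ℕ → Prop) [DecidablePred p] :
    ∑ k ∈ range (n + 2), (if p k then (n + 1).choose k else 0) =
      ∑ k ∈ range (n + 1), ((if p k then n.choose k else 0) + if p (k + 1) then n.choose k else 0) := by
  set g : ℕ → ℕ := fun k => if p k then n.choose k else 0
  have hshift : ∑ k ∈ range (n + 1), g (k + 1) + g 0 = ∑ k ∈ range (n + 1), g k := by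
    rw [← sum_range_succ' g, sum_range_succ]
    simp [g, Nat.choose_succ_self]
  rw [sum_range_succ', sum_add_distrib, ← hshift]
  simp only [Nat.choose_succ_succ', ite_add_zero, sum_add_distrib, Nat.choose_zero_right, g]
  ring

/-- Walks with `k` up-steps out of `n` end at height `h + 2k - n`; the window is `[0, 2h+1]`. -/
def binomWindow (n h : ℕ) : ℕ :=
  ∑ k ∈ range (n + 1), if n ≤ 2 * k + h ∧ 2 * k ≤ n + h + 1 then n.choose k else 0

theorem binomWindow_zero_left (h : ℕ) : binomWindow 0 h = 1 := by
  simp [binomWindow]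

theorem binomWindow_zero_right (n : ℕ) : binomWindow n 0 = n.choose (n / 2) := by
  rw [binomWindow, sum_eq_single_of_mem ((n + 1) / 2) (by simp; omega) (fun k _ hk => if_neg (by omega)),
    if_pos (by omega)]
  rcases Nat.even_or_odd' n with ⟨m, rfl | rfl⟩
  · congr 1; omega
  · rw [← Nat.choose_symm (by omega)]; congr 1; omega

theorem binomWindow_succ_zero (n : ℕ) : binomWindow (n + 1) 0 = binomWindow n 1 := by
  rw [binomWindow, sum_range_ite_choose_succ, binomWindow]
  refine sum_congr rfl fun k _ => ?_
  split_ifs <;> omega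

theorem binomWindow_succ_succ (n h : ℕ) :
    binomWindow (n + 1) (h + 1) = binomWindow n (h + 2) + binomWindow n h := by
  rw [binomWindow, sum_range_ite_choose_succ, binomWindow, binomWindow, ← sum_add_distrib]
  refine sum_congr rfl fun k _ => ?_
  -- in terms of `2k`: the windows `[n-h-1, n+h]` and `[n-h+1, n+h+2]` have union
  -- `[n-h-1, n+h+2]` and intersection `[n-h+1, n+h]`
  split_ifs <;> omega

section

variable {n : ℕ}

theorem cum_eq_sum_ite (v : Fin n → ℤ) (k : Fin n) : cum v k = ∑ i, if i ≤ k then v i else 0 := by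
  rw [cum, ← filter_ge_eq_Iic, sum_filter]

theorem cum_cons_zero (a : ℤ) (v : Fin n → ℤ) : cum (Fin.cons a v : Fin (n + 1) → ℤ) 0 = a := by
  simp [cum_eq_sum_ite]

theorem cum_cons_succ (a : ℤ) (v : Fin n → ℤ) (k : Fin n) :
    cum (Fin.cons a v : Fin (n + 1) → ℤ) k.succ = a + cum v k := by
  simp [cum_eq_sum_ite, Fin.sum_univ_succ]

theorem cum_neg (v : Fin n → ℤ) (k : Fin n) : cum (-v) k = -cum v k := by
  simp [cum]

theorem forall_nonneg_add_cum_cons (h a : ℤ) (v : Fin n → ℤ) :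
    (∀ k, 0 ≤ h + cum (Fin.cons a v : Fin (n + 1) → ℤ) k) ↔ 0 ≤ h + a ∧ ∀ k, 0 ≤ h + a + cum v k := by
  simp only [Fin.forall_fin_succ, cum_cons_zero, cum_cons_succ, add_assoc]

theorem zero_ple_iff (v : Fin n → ℤ) : ple 0 v ↔ ∀ k, 0 ≤ cum v k := by
  simp [ple, cum]

theorem ple_neg_neg (x y : Fin n → ℤ) : ple (-x) (-y) ↔ ple y x := by
  simp [ple, cum_neg]

theorem not_ple_zero_of_zero_ple {v : Fin (n + 1) → ℤ} (hv : isPM v) (h : ple 0 v) : ¬ple v 0 := by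
  intro h'
  have h0 := h 0
  have h0' := h' 0
  rw [← Fin.cons_self_tail v, cum_cons_zero] at h0 h0'
  rcases hv 0 with hv0 | hv0 <;> simp_all [cum]

def pmVec (f : Fin n → Bool) : Fin n → ℤ := fun i => if f i then 1 else -1

theorem pmVec_cons (b : Bool) (g : Fin n → Bool) :
    pmVec (Fin.cons b g : Fin (n + 1) → Bool) = Fin.cons (if b then 1 else -1) (pmVec g) := by
  ext i
  refine Fin.cases ?_ (fun j => ?_) i <;> simp [pmVec]

theorem pmVec_not (f : Fin n → Bool) : pmVec (fun i => !f i) = -pmVec f := by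
  ext i
  cases h : f i <;> simp [pmVec, h]

theorem isPM_pmVec (f : Fin n → Bool) : isPM (pmVec f) := fun i => by
  cases f i <;> simp [pmVec]

theorem pmVec_injective : Function.Injective (pmVec (n := n)) := by
  intro f g hfg
  ext i
  have := congrFun hfg i
  cases hf : f i <;> cases hg : g i <;> simp [pmVec, hf, hg] at this ⊢

theorem mem_range_pmVec_of_isPM {v : Fin n → ℤ} (hv : isPM v) : v ∈ Set.range pmVec := by
  refine ⟨fun i => decide (v i = 1), ?_⟩
  ext i
  rcases hv i with h | h <;> simp [pmVec, h]

end

theorem card_filter_fin_succ {α : Type*} [Fintype α] [DecidableEq α] (n : ℕ)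
    (P : (Fin (n + 1) → α) → Prop) [DecidablePred P] :
    #{f | P f} = ∑ a, #{g : Fin n → α | P (Fin.cons a g)} := by
  simp only [card_filter]
  rw [← (Fin.consEquiv fun _ => α).sum_comp, Fintype.sum_prod_type]
  rfl

def walkCount (n h : ℕ) : ℕ := #{f : Fin n → Bool | ∀ k, 0 ≤ (h : ℤ) + cum (pmVec f) k}

theorem walkCount_zero_left (h : ℕ) : walkCount 0 h = 1 := by
  simp [walkCount]

theorem walkCount_succ_zero (n : ℕ) : walkCount (n + 1) 0 = walkCount n 1 := by
  simp only [walkCount, card_filter_fin_succ, Fintype.sum_bool, pmVec_cons, forall_nonneg_add_cum_cons]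
  norm_num

theorem walkCount_succ_succ (n h : ℕ) :
    walkCount (n + 1) (h + 1) = walkCount n (h + 2) + walkCount n h := by
  simp only [walkCount, card_filter_fin_succ, Fintype.sum_bool, pmVec_cons, forall_nonneg_add_cum_cons]
  congr 2 <;> ext g <;> push_cast
  · rw [show (h : ℤ) + 1 + 1 = h + 2 by ring]
    simp only [mem_filter, mem_univ, true_and, and_iff_right_iff_imp]
    intro; positivity
  · simp

theorem walkCount_eq_binomWindow (n h : ℕ) : walkCount n h = binomWindow n h := by
  induction n generalizing h with
  | zero => rw [walkCount_zero_left, binomWindow_zero_left]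
  | succ n ih =>
    cases h with
    | zero => rw [walkCount_succ_zero, binomWindow_succ_zero, ih]
    | succ h => rw [walkCount_succ_succ, binomWindow_succ_succ, ih, ih]

section

open scoped Classical

theorem card_zero_ple_pmVec (n : ℕ) : #{f : Fin n → Bool | ple 0 (pmVec f)} = n.choose (n / 2) := by
  rw [← binomWindow_zero_right, ← walkCount_eq_binomWindow, walkCount]
  simp only [zero_ple_iff, Nat.cast_zero, zero_add]

theorem card_ple_zero_pmVec (n : ℕ) : #{f : Fin n → Bool | ple (pmVec f) 0} = n.choose (n / 2) := by
  rw [← card_zero_ple_pmVec]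
  refine card_nbij' (fun f i => !f i) (fun f i => !f i) (fun f hf => ?_) (fun f hf => ?_)
    (fun f _ => by simp) (fun f _ => by simp)
  · simpa [pmVec_not] using (ple_neg_neg 0 (pmVec f)).2 (by simpa using hf)
  · simpa [pmVec_not] using (ple_neg_neg (pmVec f) 0).2 (by simpa using hf)

theorem card_inQ_pmVec (n : ℕ) :
    #{f : Fin (n + 1) → Bool | inQ (pmVec f)} = 2 ^ (n + 1) - 2 * (n + 1).choose ((n + 1) / 2) := by
  have hdisj : Disjoint ({f | ple (pmVec f) 0} : Finset (Fin (n + 1) → Bool))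
      ({f | ple 0 (pmVec f)} : Finset _) :=
    disjoint_filter.2 fun f _ hle hge => not_ple_zero_of_zero_ple (isPM_pmVec f) hge hle
  have hsplit := card_filter_add_card_filter_not (s := univ)
    fun f : Fin (n + 1) → Bool => ple (pmVec f) 0 ∨ ple 0 (pmVec f)
  rw [filter_or, card_union_of_disjoint hdisj, card_ple_zero_pmVec, card_zero_ple_pmVec, card_univ,
    Fintype.card_fun, Fintype.card_bool, Fintype.card_fin] at hsplit
  simp only [inQ, isPM_pmVec, true_and, ← not_or]
  omega

end

theorem stmt5 {n : ℕ} (hn : 1 ≤ n) :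
    Set.ncard {v : Fin n → ℤ | inQ v} = 2 ^ n - 2 * Nat.choose n (n / 2) := by
  classical
  obtain ⟨m, rfl⟩ := Nat.exists_eq_add_of_le' hn
  rw [← Set.image_preimage_eq_of_subset (s := {v | inQ v}) fun v hv => mem_range_pmVec_of_isPM hv.1,
    Set.ncard_image_of_injective _ pmVec_injective, Set.preimage_ofPred_eq, Set.ncard_eq_toFinset_card',
    Set.toFinset_ofPred, card_inQ_pmVec]
end

section
/- For n ≥ 1, the number of vectors v ∈ P(n) with 0 ≺ v (equivalently, the number of vectors v with all entries in {1, −1} all of whose partial sums v_1 + ⋯ + v_k, k ∈ {1,…,n}, are nonnegative) equals binomial(n, ⌊n/2⌋). -/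
open Finset

/-! ### Auxiliary development for Statement 6 -/

def stp (b : Bool) : ℤ := if b then 1 else -1

def cumb {n : ℕ} (b : Fin n → Bool) (k : Fin n) : ℤ := ∑ i ∈ Finset.Iic k, stp (b i)

noncomputable def Acard (h : ℤ) (n : ℕ) : ℕ :=
  (Finset.univ.filter fun b : Fin n → Bool => ∀ k : Fin n, 0 ≤ h + cumb b k).card

lemma sum_Iic_succ {n : ℕ} (f : Fin (n+1) → ℤ) (j : Fin n) :
    ∑ i ∈ Finset.Iic j.succ, f i = f 0 + ∑ i ∈ Finset.Iic j, f i.succ := by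
  have h1 : ∑ i ∈ Finset.Iic j.succ, f i
      = ∑ i : Fin (n+1), if i ∈ Finset.Iic j.succ then f i else 0 := by
    rw [Finset.sum_ite_mem, Finset.univ_inter]
  rw [h1, Fin.sum_univ_succ]
  have h2 : ∀ i : Fin n, (if i.succ ∈ Finset.Iic j.succ then f i.succ else 0)
      = if i ∈ Finset.Iic j then f i.succ else 0 := by
    intro i; simp [Finset.mem_Iic, Fin.succ_le_succ_iff]
  simp only [h2, Finset.sum_ite_mem, Finset.univ_inter]
  simp [Finset.mem_Iic, Fin.zero_le]

lemma Iic_zero_fin {n : ℕ} : (Finset.Iic (0 : Fin (n+1))) = {0} := by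
  ext i; simp [Finset.mem_Iic, Fin.le_zero_iff]

lemma cumb_cons_zero {n : ℕ} (x : Bool) (b : Fin n → Bool) :
    cumb (Fin.cons x b) (0 : Fin (n+1)) = stp x := by
  simp [cumb, Iic_zero_fin]

lemma cumb_cons_succ {n : ℕ} (x : Bool) (b : Fin n → Bool) (j : Fin n) :
    cumb (Fin.cons x b) j.succ = stp x + cumb b j := by
  unfold cumb
  rw [sum_Iic_succ]
  simp [Fin.cons_zero, Fin.cons_succ]

lemma P_cons {n : ℕ} (h : ℤ) (x : Bool) (b : Fin n → Bool) :
    (∀ k : Fin (n+1), 0 ≤ h + cumb (Fin.cons x b) k) ↔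
      (0 ≤ h + stp x ∧ ∀ j : Fin n, 0 ≤ (h + stp x) + cumb b j) := by
  constructor
  · intro H
    refine ⟨by simpa [cumb_cons_zero] using H 0, fun j => ?_⟩
    have := H j.succ
    rw [cumb_cons_succ] at this
    linarith
  · rintro ⟨h0, H⟩ k
    refine Fin.cases ?_ ?_ k
    · simpa [cumb_cons_zero] using h0
    · intro j
      rw [cumb_cons_succ]
      have := H j
      linarith

lemma filter_and_card {n : ℕ} (c : Prop) [Decidable c] (Q : (Fin n → Bool) → Prop)
    [DecidablePred Q] :
    (Finset.univ.filter fun b : Fin n → Bool => c ∧ Q b).card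
      = if c then (Finset.univ.filter Q).card else 0 := by
  by_cases hc : c
  · simp [hc]
  · simp [hc]

lemma Acard_succ (h : ℤ) (n : ℕ) :
    Acard h (n+1) = (if 0 ≤ h + 1 then Acard (h+1) n else 0)
      + (if 0 ≤ h - 1 then Acard (h-1) n else 0) := by
  classical
  unfold Acard
  set P : (Fin (n+1) → Bool) → Prop := fun f => ∀ k : Fin (n+1), 0 ≤ h + cumb f k with hP
  have hdec : (Finset.univ.filter P) =
      ((Finset.univ.filter fun b : Fin n → Bool => P (Fin.cons true b)).image (Fin.cons true))
        ∪ ((Finset.univ.filter fun b : Fin n → Bool => P (Fin.cons false b)).image (Fin.cons false)) := by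
    ext f
    simp only [Finset.mem_union, Finset.mem_image, Finset.mem_filter, Finset.mem_univ, true_and]
    constructor
    · intro hf
      cases hx : f 0 with
      | true =>
        left
        exact ⟨Fin.tail f, by rw [← hx]; rw [Fin.cons_self_tail]; exact hf,
          by rw [← hx]; exact Fin.cons_self_tail f⟩
      | false =>
        right
        exact ⟨Fin.tail f, by rw [← hx]; rw [Fin.cons_self_tail]; exact hf,
          by rw [← hx]; exact Fin.cons_self_tail f⟩
    · rintro (⟨b, hb, rfl⟩ | ⟨b, hb, rfl⟩) <;> exact hb
  rw [hdec, Finset.card_union_of_disjoint, Finset.card_image_of_injective _ (Fin.cons_right_injective _),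
    Finset.card_image_of_injective _ (Fin.cons_right_injective _)]
  · have e1 : ∀ b : Fin n → Bool, P (Fin.cons true b) ↔
        (0 ≤ h + 1 ∧ ∀ j : Fin n, 0 ≤ (h + 1) + cumb b j) := by
      intro b; rw [hP]; simpa [stp] using P_cons h true b
    have e2 : ∀ b : Fin n → Bool, P (Fin.cons false b) ↔
        (0 ≤ h - 1 ∧ ∀ j : Fin n, 0 ≤ (h - 1) + cumb b j) := by
      intro b; rw [hP]
      have := P_cons h false b
      simp only [stp, if_neg Bool.false_ne_true] at this
      constructor
      · intro hb
        obtain ⟨h1, h2⟩ := (this).1 hb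
        exact ⟨by linarith, fun j => by have := h2 j; linarith⟩
      · intro ⟨h1, h2⟩
        exact this.2 ⟨by linarith, fun j => by have := h2 j; linarith⟩
    rw [Finset.filter_congr (fun b _ => e1 b), Finset.filter_congr (fun b _ => e2 b)]
    rw [filter_and_card, filter_and_card]
  · rw [Finset.disjoint_left]
    intro f h1 h2
    obtain ⟨b, _, rfl⟩ := Finset.mem_image.mp h1
    obtain ⟨b', _, hb'⟩ := Finset.mem_image.mp h2
    have := congrFun hb' 0
    simp [Fin.cons_zero] at this

def cc (n i : ℕ) : ℕ := if i ≤ n then Nat.choose n ((n - i)/2) else 0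

def Fn (h n : ℕ) : ℕ := ∑ i ∈ Finset.range (h+1), cc n i

def Gf : ℕ → ℕ → ℕ
  | _, 0 => 1
  | h, n+1 => Gf (h+1) n + (if h = 0 then 0 else Gf (h-1) n)

lemma cc_eq (n i : ℕ) (h : i ≤ n) : cc n i = Nat.choose n ((n - i)/2) := if_pos h

lemma cc_eq' (n i : ℕ) (h : ¬ i ≤ n) : cc n i = 0 := if_neg h

lemma key1 (n : ℕ) : cc (n+1) 0 = cc n 0 + cc n 1 := by
  rcases n with _ | m
  · simp [cc]
  · rw [cc_eq _ _ (Nat.zero_le _), cc_eq _ _ (Nat.zero_le _), cc_eq _ _ (by omega)]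
    rcases Nat.even_or_odd (m+1) with ⟨t, ht⟩ | ⟨t, ht⟩
    · obtain ⟨s, rfl⟩ : ∃ s, t = s + 1 := ⟨t - 1, by omega⟩
      rw [show (m + 1 + 1 - 0) / 2 = s + 1 by omega,
        show (m + 1 - 0) / 2 = s + 1 by omega,
        show (m + 1 - 1) / 2 = s by omega,
        Nat.choose_succ_succ]
      simp only [Nat.succ_eq_add_one]
      omega
    · rw [show (m + 1 + 1 - 0) / 2 = t + 1 by omega,
        show (m + 1 - 0) / 2 = t by omega,
        show (m + 1 - 1) / 2 = t by omega,
        Nat.choose_succ_succ]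
      have hsymm : (m+1).choose (t+1) = (m+1).choose t := by
        rw [← Nat.choose_symm (by omega : t + 1 ≤ m + 1), show m + 1 - (t+1) = t by omega]
      simp only [Nat.succ_eq_add_one]
      omega

lemma key2 (n g : ℕ) : cc (n+1) (g+1) = cc n (g+2) + cc n g := by
  rcases lt_trichotomy n g with hlt | heq | hgt
  · rw [cc_eq' _ _ (by omega), cc_eq' _ _ (by omega), cc_eq' _ _ (by omega)]
  · subst heq
    rw [cc_eq _ _ (by omega), cc_eq' _ _ (by omega), cc_eq _ _ (by omega)]
    rw [show (n + 1 - (n+1)) / 2 = 0 by omega, show (n - n) / 2 = 0 by omega]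
    simp
  · obtain ⟨m, rfl⟩ : ∃ m, n = g + 1 + m := ⟨n - (g+1), by omega⟩
    rcases Nat.eq_zero_or_pos m with rfl | hm
    · rw [cc_eq _ _ (by omega), cc_eq' _ _ (by omega), cc_eq _ _ (by omega)]
      rw [show (g + 1 + 0 + 1 - (g+1)) / 2 = 0 by omega,
        show (g + 1 + 0 - g) / 2 = 0 by omega]
      simp
    · rw [cc_eq _ _ (by omega), cc_eq _ _ (by omega), cc_eq _ _ (by omega)]
      rcases Nat.even_or_odd m with ⟨t, ht⟩ | ⟨t, ht⟩
      · obtain ⟨s, rfl⟩ : ∃ s, t = s + 1 := ⟨t - 1, by omega⟩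
        rw [show (g + 1 + m + 1 - (g+1)) / 2 = s + 1 by omega,
          show (g + 1 + m - (g+2)) / 2 = s by omega,
          show (g + 1 + m - g) / 2 = s + 1 by omega,
          Nat.choose_succ_succ]
      · rw [show (g + 1 + m + 1 - (g+1)) / 2 = t + 1 by omega,
          show (g + 1 + m - (g+2)) / 2 = t by omega,
          show (g + 1 + m - g) / 2 = t + 1 by omega,
          Nat.choose_succ_succ]

lemma Fn_rec (h n : ℕ) :
    Fn h (n+1) = Fn (h+1) n + (if h = 0 then 0 else Fn (h-1) n) := by
  induction h with
  | zero =>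
    simp only [if_pos rfl, Nat.add_zero]
    show ∑ i ∈ Finset.range 1, cc (n+1) i = Fn 1 n
    rw [Finset.sum_range_one, key1]
    show _ = ∑ i ∈ Finset.range 2, cc n i
    rw [Finset.sum_range_succ, Finset.sum_range_one]
  | succ h ih =>
    have step : Fn (h+1) (n+1) = Fn h (n+1) + cc (n+1) (h+1) := by
      unfold Fn; rw [Finset.sum_range_succ]
    rw [step, ih, key2 n h, show h + 2 = h + 1 + 1 from rfl]
    have e1 : Fn (h+1+1) n = Fn (h+1) n + cc n (h+1+1) := by
      unfold Fn; rw [Finset.sum_range_succ]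
    simp only [Nat.add_sub_cancel, if_neg (Nat.succ_ne_zero h)]
    cases h with
    | zero =>
      simp
      have e0 : Fn 0 n = cc n 0 := by unfold Fn; exact Finset.sum_range_one _
      have b1 : Fn 2 n = Fn (0+1+1) n := rfl
      have b2 : cc n 2 = cc n (0+1+1) := rfl
      have b3 : Fn 1 n = Fn (0+1) n := rfl
      omega
    | succ m =>
      simp only [if_neg (Nat.succ_ne_zero m), Nat.add_sub_cancel]
      have e2 : Fn (m+1) n = Fn m n + cc n (m+1) := by
        unfold Fn; rw [Finset.sum_range_succ]
      omega

lemma Gf_eq_Fn (n : ℕ) : ∀ h, Gf h n = Fn h n := by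
  induction n with
  | zero =>
    intro h
    show 1 = Fn h 0
    unfold Fn
    rw [Finset.sum_range_succ']
    have : ∀ i ∈ Finset.range h, cc 0 (i+1) = 0 := by
      intro i _; simp [cc]
    rw [Finset.sum_congr rfl this]
    simp [cc]
  | succ n ih =>
    intro h
    show Gf (h+1) n + (if h = 0 then 0 else Gf (h-1) n) = Fn h (n+1)
    rw [Fn_rec, ih]
    rcases Nat.eq_zero_or_pos h with rfl | hpos
    · simp
    · simp only [if_neg (by omega : ¬ h = 0), ih]

lemma Gf_zero (n : ℕ) : Gf 0 n = Nat.choose n (n/2) := by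
  rw [Gf_eq_Fn]
  unfold Fn
  rw [Finset.sum_range_one]
  simp [cc]

lemma Acard_eq_Gf (n : ℕ) : ∀ h : ℕ, Acard (h : ℤ) n = Gf h n := by
  induction n with
  | zero =>
    intro h
    show _ = 1
    unfold Acard
    rw [Finset.filter_true_of_mem (fun b _ => fun k => k.elim0)]
    simp
  | succ n ih =>
    intro h
    rw [Acard_succ]
    show _ = Gf (h+1) n + (if h = 0 then 0 else Gf (h-1) n)
    rcases Nat.eq_zero_or_pos h with rfl | hpos
    · rw [if_pos (by norm_num), if_neg (by norm_num)]
      rw [show ((0:ℕ):ℤ) + 1 = ((1:ℕ):ℤ) by norm_num, ih 1]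
      simp
    · obtain ⟨m, rfl⟩ : ∃ m, h = m + 1 := ⟨h - 1, by omega⟩
      rw [if_pos (by push_cast; omega), if_pos (by push_cast; omega)]
      rw [show ((m+1:ℕ):ℤ) + 1 = ((m+2:ℕ):ℤ) by push_cast; ring, ih (m+2),
        show ((m+1:ℕ):ℤ) - 1 = ((m:ℕ):ℤ) by push_cast; ring, ih m]
      rw [if_neg (Nat.succ_ne_zero m)]
      norm_num

lemma stp_inj : Function.Injective (fun b : Fin 0 → Bool => b) := fun _ _ h => h

theorem stmt6 {n : ℕ} (hn : 1 ≤ n) :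
    Set.ncard {v : Fin n → ℤ | isPM v ∧ ple 0 v ∧ (0 : Fin n → ℤ) ≠ v} =
      Nat.choose n (n / 2) := by
  classical
  have hcum0 : ∀ k : Fin n, cum (0 : Fin n → ℤ) k = 0 := by
    intro k; simp [cum]
  have hinj : Function.Injective (fun (b : Fin n → Bool) (i : Fin n) => stp (b i)) := by
    intro a b hab
    funext i
    have h : stp (a i) = stp (b i) := congrFun hab i
    simp only [stp] at h
    cases ha : a i <;> cases hbb : b i <;> rw [ha, hbb] at h <;>
      first | rfl | (norm_num at h)
  have hset : {v : Fin n → ℤ | isPM v ∧ ple 0 v ∧ (0 : Fin n → ℤ) ≠ v}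
      = ↑((Finset.univ.filter fun b : Fin n → Bool => ∀ k : Fin n, 0 ≤ (0:ℤ) + cumb b k).image
          (fun b i => stp (b i))) := by
    ext v
    simp only [Set.mem_setOf_eq, Finset.coe_image, Set.mem_image, Finset.mem_coe,
      Finset.mem_filter, Finset.mem_univ, true_and]
    constructor
    · rintro ⟨hpm, hle, _⟩
      refine ⟨fun i => decide (v i = 1), fun k => ?_, ?_⟩
      · have hv : (fun i => stp (decide (v i = 1))) = v := by
          funext i
          rcases hpm i with h1 | h1 <;> simp [stp, h1]
        have h1 : cumb (fun i => decide (v i = 1)) k = cum v k := by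
          unfold cumb cum
          refine Finset.sum_congr rfl fun i _ => ?_
          rcases hpm i with h1 | h1 <;> simp [stp, h1]
        have h2 := hle k
        rw [hcum0 k] at h2
        rw [h1]
        linarith
      · funext i
        rcases hpm i with h1 | h1 <;> simp [stp, h1]
    · rintro ⟨b, hb, rfl⟩
      refine ⟨fun i => by cases hbi : b i <;> simp [stp, hbi], fun k => ?_, ?_⟩
      · have h1 : cum (fun i => stp (b i)) k = cumb b k := rfl
        rw [hcum0 k, h1]
        have := hb k
        linarith
      · intro h0
        have := congrFun h0 ⟨0, hn⟩
        cases hb0 : b ⟨0, hn⟩ <;> rw [hb0] at this <;> simp [stp] at this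
  rw [hset, Set.ncard_coe_finset, Finset.card_image_of_injective _ hinj]
  have : (Finset.univ.filter fun b : Fin n → Bool => ∀ k : Fin n, 0 ≤ (0:ℤ) + cumb b k).card
      = Acard ((0:ℕ):ℤ) n := by
    unfold Acard
    norm_num
  rw [this, Acard_eq_Gf n 0, Gf_zero]
end

section
/- Let c₀ ∈ ℤ^n be the vector with (c₀)_i = n + 1 − i, i.e., c₀ = (n, n−1, …, 2, 1). If v, w ∈ Q(n) and w covers v in the poset (Q(n), ⪯_Q) (that is, v ≺_Q w and there is no u ∈ Q(n) with v ≺_Q u ≺_Q w), then w·c₀ = v·c₀ + 2. Consequently Q(n) is graded, with rank function v ↦ (v·c₀ + n(n+1)/2)/2 − n (up to an additive constant). -/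
open Finset

/-- The rank function of `Q(n)`. -/
def rankQ {n : ℕ} (c0 : Fin n → ℤ) (v : Fin n → ℤ) : ℤ :=
  (dotp v c0 + n * (n + 1) / 2) / 2 - n

section Aux

variable {n : ℕ}

lemma l_cum_bot (x : Fin n → ℤ) (k : Fin n) (h : k.val = 0) : cum x k = x k := by
  unfold cum
  have : Finset.Iic k = {k} := by
    ext j; simp only [Finset.mem_Iic, Finset.mem_singleton, Fin.le_def, Fin.ext_iff]; omega
  rw [this, Finset.sum_singleton]

lemma l_cum_succ (x : Fin n → ℤ) (m : ℕ) (h : m + 1 < n) :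
    cum x ⟨m + 1, h⟩ = cum x ⟨m, by omega⟩ + x ⟨m + 1, h⟩ := by
  unfold cum
  have : Finset.Iic (⟨m + 1, h⟩ : Fin n) = insert ⟨m + 1, h⟩ (Finset.Iic ⟨m, by omega⟩) := by
    ext j
    simp only [Finset.mem_Iic, Finset.mem_insert, Fin.le_def, Fin.ext_iff]
    omega
  rw [this, Finset.sum_insert (by simp only [Finset.mem_Iic, Fin.le_def]; omega)]
  ring

lemma l_cum_inj {x y : Fin n → ℤ} (h : ∀ k, cum x k = cum y k) : x = y := by
  funext i
  rcases Nat.eq_zero_or_pos i.val with h0 | hpos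
  · rw [← l_cum_bot x i h0, ← l_cum_bot y i h0]; exact h i
  · obtain ⟨m, hm⟩ : ∃ m, i.val = m + 1 := ⟨i.val - 1, by omega⟩
    have hlt : m + 1 < n := hm ▸ i.isLt
    have hi : i = ⟨m + 1, hlt⟩ := Fin.ext hm
    have hx := l_cum_succ x m hlt
    have hy := l_cum_succ y m hlt
    rw [hi]
    have h1 := h ⟨m + 1, hlt⟩
    have h2 := h ⟨m, by omega⟩
    omega

lemma l_even_cum {x : Fin n → ℤ} (hx : isPM x) (k : Fin n) :
    Even (cum x k + ((k.val : ℤ) + 1)) := by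
  have hcard : (Finset.Iic k).card = k.val + 1 := Fin.card_Iic k
  have : cum x k + ((k.val : ℤ) + 1) = ∑ i ∈ Finset.Iic k, (x i + 1) := by
    rw [Finset.sum_add_distrib, Finset.sum_const, hcard]
    unfold cum; ring
  rw [this]
  apply Finset.even_sum
  intro i _
  rcases hx i with h | h <;> rw [h] <;> decide

lemma l_sum_ind (m : ℕ) (c : ℤ) (N : ℕ) :
    ∑ k ∈ Finset.range N, (if m ≤ k then c else 0) = ((N - m : ℕ) : ℤ) * c := by
  induction N with
  | zero => simp
  | succ N ih =>
    rw [Finset.sum_range_succ, ih]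
    by_cases h : m ≤ N
    · rw [if_pos h]
      have h1 : (N + 1 - m) = (N - m) + 1 := by omega
      rw [h1]; push_cast; ring
    · rw [if_neg h]
      have h1 : N + 1 - m = 0 := by omega
      have h2 : N - m = 0 := by omega
      rw [h1, h2]; simp

lemma l_abel {c0 : Fin n → ℤ} (hc0 : ∀ i : Fin n, c0 i = (n : ℤ) - i.val) (x : Fin n → ℤ) :
    dotp x c0 = ∑ k : Fin n, cum x k := by
  have h1 : ∀ k : Fin n, cum x k = ∑ i : Fin n, (if i ≤ k then x i else 0) := by
    intro k
    unfold cum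
    rw [← Finset.sum_filter]
    congr 1
    ext j; simp [Finset.mem_Iic]
  calc dotp x c0 = ∑ i : Fin n, ((n - i.val : ℕ) : ℤ) * x i := by
        unfold dotp
        apply Finset.sum_congr rfl
        intro i _
        rw [hc0 i, Nat.cast_sub (le_of_lt i.isLt)]
        ring
    _ = ∑ i : Fin n, ∑ k : Fin n, (if i ≤ k then x i else 0) := by
        apply Finset.sum_congr rfl
        intro i _
        symm
        calc ∑ k : Fin n, (if i ≤ k then x i else 0)
            = ∑ k : Fin n, (if i.val ≤ k.val then x i else 0) :=
              Finset.sum_congr rfl (fun k _ => if_congr Fin.le_def rfl rfl)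
          _ = ∑ j ∈ Finset.range n, (if i.val ≤ j then x i else 0) :=
              Fin.sum_univ_eq_sum_range (fun j => if i.val ≤ j then x i else 0) n
          _ = ((n - i.val : ℕ) : ℤ) * x i := l_sum_ind i.val (x i) n
    _ = ∑ k : Fin n, ∑ i : Fin n, (if i ≤ k then x i else 0) := Finset.sum_comm
    _ = ∑ k : Fin n, cum x k := by
        exact Finset.sum_congr rfl (fun k _ => (h1 k).symm)

lemma l_gauss (N : ℕ) : 2 * ∑ j ∈ Finset.range N, ((j : ℤ) + 1) = N * (N + 1) := by
  induction N with
  | zero => simp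
  | succ N ih =>
    rw [Finset.sum_range_succ, mul_add, ih]
    push_cast; ring

lemma l_even_dot {c0 x : Fin n → ℤ} (hc0 : ∀ i : Fin n, c0 i = (n : ℤ) - i.val)
    (hx : isPM x) : Even (dotp x c0 + (n : ℤ) * ((n : ℤ) + 1) / 2) := by
  have h1 : (n : ℤ) * ((n : ℤ) + 1) / 2 = ∑ k : Fin n, ((k.val : ℤ) + 1) := by
    have h2 : ∑ k : Fin n, ((k.val : ℤ) + 1) = ∑ j ∈ Finset.range n, ((j : ℤ) + 1) :=
      Fin.sum_univ_eq_sum_range (fun j => (j : ℤ) + 1) n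
    rw [h2, ← l_gauss n, Int.mul_ediv_cancel_left _ (by norm_num)]
  rw [l_abel hc0, h1, ← Finset.sum_add_distrib]
  exact Finset.even_sum _ (fun k _ => l_even_cum hx k)

lemma l_exists_mid {c0 v w : Fin n → ℤ} (hc0 : ∀ i : Fin n, c0 i = (n : ℤ) - i.val)
    (hv : inQ v) (hw : inQ w) (hle : ple v w) (hne : v ≠ w) :
    ∃ u : Fin n → ℤ, inQ u ∧ ple v u ∧ v ≠ u ∧ ple u w ∧ dotp u c0 = dotp v c0 + 2 := by
  -- the set of indices where cum v + 2 ≤ cum w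
  have hex : ∃ k, cum v k + 2 ≤ cum w k := by
    by_contra h
    push_neg at h
    apply hne
    apply l_cum_inj
    intro k
    have h1 := hle k
    have h2 := h k
    obtain ⟨a, ea⟩ := l_even_cum hv.1 k
    obtain ⟨b, eb⟩ := l_even_cum hw.1 k
    omega
  set S : Finset (Fin n) := Finset.univ.filter (fun k => cum v k + 2 ≤ cum w k) with hS
  have hSne : S.Nonempty := by
    obtain ⟨k, hk⟩ := hex
    exact ⟨k, by rw [hS]; exact Finset.mem_filter.mpr ⟨Finset.mem_univ k, hk⟩⟩
  obtain ⟨p, hpS, hpmin⟩ :=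
    Finset.exists_min_image S (fun q => ((n : ℤ) + 1) * cum v q - q.val) hSne
  have hpS' : cum v p + 2 ≤ cum w p := by
    have h' := hpS
    rw [hS] at h'
    exact (Finset.mem_filter.mp h').2
  have hn1 : 1 ≤ n := by have := p.isLt; omega
  -- v p = -1
  have hA : v p = -1 := by
    rcases Nat.eq_zero_or_pos p.val with h0 | hpos
    · have h1 := l_cum_bot v p h0
      have h2 := l_cum_bot w p h0
      have h3 := hv.1 p
      have h4 := hw.1 p
      omega
    · by_contra hcon
      have hvp : v p = 1 := (hv.1 p).resolve_right hcon
      obtain ⟨m, hm⟩ : ∃ m, p.val = m + 1 := ⟨p.val - 1, by omega⟩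
      have hlt : m + 1 < n := hm ▸ p.isLt
      have hp : p = ⟨m + 1, hlt⟩ := Fin.ext hm
      have hsv := l_cum_succ v m hlt
      have hsw := l_cum_succ w m hlt
      rw [← hp] at hsv hsw
      have hwle : w p ≤ 1 := by rcases hw.1 p with h | h <;> omega
      have hmem : (⟨m, by omega⟩ : Fin n) ∈ S := by
        rw [hS]
        exact Finset.mem_filter.mpr ⟨Finset.mem_univ _, by omega⟩
      have hkey := hpmin ⟨m, by omega⟩ hmem
      simp only at hkey
      have e1 : cum v ⟨m, by omega⟩ = cum v p - 1 := by omega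
      rw [e1] at hkey
      have e2 : ((n : ℤ) + 1) * (cum v p - 1) = ((n : ℤ) + 1) * cum v p - ((n : ℤ) + 1) := by ring
      rw [e2] at hkey
      have : ((m : ℤ)) = (p.val : ℤ) - 1 := by omega
      omega
  -- v (p+1) = 1 when it exists
  have hB : ∀ h : p.val + 1 < n, v ⟨p.val + 1, h⟩ = 1 := by
    intro h
    by_contra hcon
    have hvp : v ⟨p.val + 1, h⟩ = -1 := (hv.1 _).resolve_left hcon
    have hsv := l_cum_succ v p.val h
    have hsw := l_cum_succ w p.val h
    have hp : (⟨p.val, by omega⟩ : Fin n) = p := Fin.ext rfl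
    rw [hp] at hsv hsw
    have hwge : -1 ≤ w ⟨p.val + 1, h⟩ := by rcases hw.1 ⟨p.val + 1, h⟩ with h' | h' <;> omega
    have hmem : (⟨p.val + 1, h⟩ : Fin n) ∈ S := by
      rw [hS]
      exact Finset.mem_filter.mpr ⟨Finset.mem_univ _, by omega⟩
    have hkey := hpmin ⟨p.val + 1, h⟩ hmem
    simp only at hkey
    have e1 : cum v ⟨p.val + 1, h⟩ = cum v p - 1 := by omega
    rw [e1] at hkey
    have e2 : ((n : ℤ) + 1) * (cum v p - 1) = ((n : ℤ) + 1) * cum v p - ((n : ℤ) + 1) := by ring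
    rw [e2] at hkey
    push_cast at hkey
    omega
  -- define u
  set u : Fin n → ℤ := fun i => if i = p then 1 else if i.val = p.val + 1 then -1 else v i with hu
  have huPM : isPM u := by
    intro i
    simp only [hu]
    split_ifs
    · exact Or.inl rfl
    · exact Or.inr rfl
    · exact hv.1 i
  have hdiff : ∀ i : Fin n,
      u i = v i + ((if i = p then (2 : ℤ) else 0) + (if i.val = p.val + 1 then (-2 : ℤ) else 0)) := by
    intro i
    by_cases h1 : i = p
    · subst h1
      simp only [hu, if_pos rfl, hA]
      norm_num
    · by_cases h2 : i.val = p.val + 1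
      · have hlt : p.val + 1 < n := h2 ▸ i.isLt
        have hi : i = ⟨p.val + 1, hlt⟩ := Fin.ext h2
        have hv1 : v i = 1 := by rw [hi]; exact hB hlt
        simp only [hu, if_neg h1, if_pos h2, hv1]
        norm_num
      · simp only [hu, if_neg h1, if_neg h2]
        norm_num
  have hcum : ∀ k : Fin n, cum u k =
      cum v k + ((if p ≤ k then (2 : ℤ) else 0) + (if p.val + 1 ≤ k.val then (-2 : ℤ) else 0)) := by
    intro k
    have e1 : ∑ i ∈ Finset.Iic k, (if i = p then (2 : ℤ) else 0) = (if p ≤ k then (2 : ℤ) else 0) := by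
      rw [Finset.sum_ite_eq' (Finset.Iic k) p (fun _ => (2 : ℤ))]
      simp [Finset.mem_Iic]
    have e2 : ∑ i ∈ Finset.Iic k, (if i.val = p.val + 1 then (-2 : ℤ) else 0) =
        (if p.val + 1 ≤ k.val then (-2 : ℤ) else 0) := by
      by_cases hlt : p.val + 1 < n
      · have hcg : ∀ i ∈ Finset.Iic k,
            (if i.val = p.val + 1 then (-2 : ℤ) else 0) = (if i = (⟨p.val + 1, hlt⟩ : Fin n) then (-2 : ℤ) else 0) := by
          intro i _
          congr 1
          simp [Fin.ext_iff]
        rw [Finset.sum_congr rfl hcg, Finset.sum_ite_eq' (Finset.Iic k) (⟨p.val + 1, hlt⟩ : Fin n) (fun _ => (-2 : ℤ))]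
        simp [Finset.mem_Iic, Fin.le_def]
      · have h1 : ∀ i ∈ Finset.Iic k, (if i.val = p.val + 1 then (-2 : ℤ) else 0) = 0 := by
          intro i _
          rw [if_neg (by have := i.isLt; omega)]
        rw [Finset.sum_congr rfl h1, Finset.sum_const_zero,
            if_neg (by have := k.isLt; omega)]
    unfold cum
    rw [Finset.sum_congr rfl (fun i _ => hdiff i), Finset.sum_add_distrib, Finset.sum_add_distrib,
        e1, e2]
  have hvu : ple v u := by
    intro k
    rw [hcum k]
    simp only [Fin.le_def]
    split_ifs <;> omega
  have huw : ple u w := by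
    intro k
    rw [hcum k]
    have h1 := hle k
    by_cases hk1 : p.val ≤ k.val
    · by_cases hk2 : p.val + 1 ≤ k.val
      · rw [if_pos (Fin.le_def.mpr hk1), if_pos hk2]; omega
      · have hkp : k = p := Fin.ext (by omega)
        rw [if_pos (Fin.le_def.mpr hk1), if_neg hk2, hkp]
        omega
    · rw [if_neg (fun h => hk1 (Fin.le_def.mp h)), if_neg (by omega)]
      omega
  have hneu : v ≠ u := by
    intro h
    have h2 := hcum p
    rw [← h] at h2
    rw [if_pos (le_refl p), if_neg (by omega)] at h2
    omega
  have hdot : dotp u c0 = dotp v c0 + 2 := by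
    rw [l_abel hc0, l_abel hc0]
    rw [Finset.sum_congr rfl (fun k _ => hcum k), Finset.sum_add_distrib, Finset.sum_add_distrib]
    have h1 : ∑ k : Fin n, (if p ≤ k then (2 : ℤ) else 0) = ((n - p.val : ℕ) : ℤ) * 2 := by
      calc ∑ k : Fin n, (if p ≤ k then (2 : ℤ) else 0)
          = ∑ k : Fin n, (if p.val ≤ k.val then (2 : ℤ) else 0) :=
            Finset.sum_congr rfl (fun k _ => if_congr Fin.le_def rfl rfl)
        _ = ∑ j ∈ Finset.range n, (if p.val ≤ j then (2 : ℤ) else 0) :=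
            Fin.sum_univ_eq_sum_range (fun j => if p.val ≤ j then (2 : ℤ) else 0) n
        _ = ((n - p.val : ℕ) : ℤ) * 2 := l_sum_ind p.val 2 n
    have h2 : ∑ k : Fin n, (if p.val + 1 ≤ k.val then (-2 : ℤ) else 0) = ((n - (p.val + 1) : ℕ) : ℤ) * (-2) := by
      rw [Fin.sum_univ_eq_sum_range (fun j => if p.val + 1 ≤ j then (-2 : ℤ) else 0) n,
          l_sum_ind (p.val + 1) (-2) n]
    rw [h1, h2]
    have hp := p.isLt
    have c1 : ((n - p.val : ℕ) : ℤ) = (n : ℤ) - p.val := by omega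
    have c2 : ((n - (p.val + 1) : ℕ) : ℤ) = (n : ℤ) - p.val - 1 := by omega
    rw [c1, c2]
    ring
  refine ⟨u, ⟨huPM, ?_, ?_⟩, hvu, hneu, huw, hdot⟩
  · intro h
    exact hv.2.1 (fun k => le_trans (hvu k) (h k))
  · intro h
    exact hw.2.2 (fun k => le_trans (h k) (huw k))

end Aux

theorem stmt7 {n : ℕ} (c0 : Fin n → ℤ) (hc0 : ∀ i : Fin n, c0 i = (n : ℤ) - i.val) :
    (∀ v w : Fin n → ℤ, inQ v → inQ w →
        (ple v w ∧ v ≠ w ∧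
          ¬∃ u : Fin n → ℤ, inQ u ∧ ple v u ∧ v ≠ u ∧ ple u w ∧ u ≠ w) →
        dotp w c0 = dotp v c0 + 2) ∧
    (∀ v w : Fin n → ℤ, inQ v → inQ w → ple v w → v ≠ w →
        rankQ c0 v < rankQ c0 w) ∧
    (∀ v w : Fin n → ℤ, inQ v → inQ w →
        (ple v w ∧ v ≠ w ∧
          ¬∃ u : Fin n → ℤ, inQ u ∧ ple v u ∧ v ≠ u ∧ ple u w ∧ u ≠ w) →
        rankQ c0 w = rankQ c0 v + 1) := by
  have key1 : ∀ v w : Fin n → ℤ, inQ v → inQ w →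
      (ple v w ∧ v ≠ w ∧
        ¬∃ u : Fin n → ℤ, inQ u ∧ ple v u ∧ v ≠ u ∧ ple u w ∧ u ≠ w) →
      dotp w c0 = dotp v c0 + 2 := by
    rintro v w hv hw ⟨hle, hne, hno⟩
    by_contra hne2
    obtain ⟨u, huQ, hvu, hvne, huw, hdot⟩ := l_exists_mid hc0 hv hw hle hne
    exact hno ⟨u, huQ, hvu, hvne, huw, fun h => hne2 (by rw [← h, hdot])⟩
  have hlt : ∀ v w : Fin n → ℤ, inQ v → inQ w → ple v w → v ≠ w →
      dotp v c0 < dotp w c0 := by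
    intro v w hv hw hle hne
    rw [l_abel hc0, l_abel hc0]
    have hex : ∃ k, cum v k ≠ cum w k := by
      by_contra h; push_neg at h; exact hne (l_cum_inj h)
    obtain ⟨k, hk⟩ := hex
    exact Finset.sum_lt_sum (fun i _ => hle i) ⟨k, Finset.mem_univ k, lt_of_le_of_ne (hle k) hk⟩
  refine ⟨key1, ?_, ?_⟩
  · intro v w hv hw hle hne
    have h := hlt v w hv hw hle hne
    obtain ⟨a, ha⟩ := l_even_dot hc0 hv.1
    obtain ⟨b, hb⟩ := l_even_dot hc0 hw.1
    unfold rankQ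
    generalize hM : (n : ℤ) * ((n : ℤ) + 1) = M at ha hb ⊢
    omega
  · intro v w hv hw hcov
    have h := key1 v w hv hw hcov
    obtain ⟨a, ha⟩ := l_even_dot hc0 hv.1
    obtain ⟨b, hb⟩ := l_even_dot hc0 hw.1
    unfold rankQ
    generalize hM : (n : ℤ) * ((n : ℤ) + 1) = M at ha hb ⊢
    omega
end

section
/- For n ≥ 3, an element v ∈ Q(n) is a maximal element of (Q(n), ⪯_Q) (i.e., there is no w ∈ Q(n) with v ≺_Q w) if and only if v = m_k for some k with 0 ≤ k ≤ ℓ; and v is a minimal element of (Q(n), ⪯_Q) if and only if v = −m_k for some k with 0 ≤ k ≤ ℓ. -/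
open Finset

namespace Aux
variable {n : ℕ}

def Sv (v : Fin n → ℤ) : ℕ → ℤ := fun j => ∑ i ∈ Finset.range j, (if h : i < n then v ⟨i, h⟩ else 1)

lemma Sv_zero (v : Fin n → ℤ) : Sv v 0 = 0 := by simp [Sv]

lemma Sv_succ (v : Fin n → ℤ) (j : ℕ) (hj : j < n) : Sv v (j+1) = Sv v j + v ⟨j, hj⟩ := by
  simp [Sv, Finset.sum_range_succ, hj]

lemma cum_eq (v : Fin n → ℤ) (k : Fin n) : cum v k = Sv v (k.1+1) := by
  have h1 : Finset.range (k.1+1) = Finset.Iic k.1 := by ext x; simp [Nat.lt_succ_iff]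
  unfold cum Sv
  rw [h1, ← Fin.map_valEmbedding_Iic, Finset.sum_map]
  apply Finset.sum_congr rfl
  intro i _
  simp [Fin.valEmbedding, i.isLt]

lemma ple_iff (v w : Fin n → ℤ) : ple v w ↔ ∀ j ≤ n, Sv v j ≤ Sv w j := by
  constructor
  · intro h j hj
    match j with
    | 0 => simp [Sv_zero]
    | (t+1) =>
      have ht : t < n := hj
      have := h ⟨t, ht⟩
      rwa [cum_eq, cum_eq] at this
  · intro h k
    rw [cum_eq, cum_eq]
    exact h (k.1+1) k.isLt

lemma Sv_bound (v : Fin n → ℤ) (hv : isPM v) :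
    ∀ j ≤ n, ∀ i ≤ j, Sv v j ≤ Sv v i + ((j : ℤ) - i) ∧ Sv v i ≤ Sv v j + ((j : ℤ) - i) := by
  intro j
  induction j with
  | zero => intro _ i hi; interval_cases i; simp
  | succ t ih =>
    intro hj i hi
    have ht : t < n := hj
    rcases Nat.lt_or_ge i (t+1) with hlt | hge
    · have hit : i ≤ t := by omega
      have := ih (by omega) i hit
      have hs := Sv_succ v t ht
      rcases hv ⟨t, ht⟩ with h1 | h1 <;> (rw [h1] at hs; push_cast; omega)
    · have : i = t + 1 := by omega
      subst this; simp

lemma Sv_parity (v : Fin n → ℤ) (hv : isPM v) :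
    ∀ j ≤ n, (Sv v j + j) % 2 = 0 := by
  intro j
  induction j with
  | zero => intro _; simp [Sv_zero]
  | succ t ih =>
    intro hj
    have ht : t < n := hj
    have hs := Sv_succ v t ht
    have := ih (by omega)
    rcases hv ⟨t, ht⟩ with h1 | h1 <;> (rw [h1] at hs; push_cast [hs] at *; omega)

lemma Sv_mvec (k : ℕ) (hk : 2*k+1 ≤ n) :
    ∀ j ≤ n, Sv (mvec n k) j =
      if j ≤ k then (j:ℤ) else if j ≤ 2*k+1 then 2*(k:ℤ) - j else (j:ℤ) - 2*k - 2 := by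
  intro j
  induction j with
  | zero => intro _; simp [Sv_zero]
  | succ t ih =>
    intro hj
    have ht : t < n := hj
    have hs := Sv_succ (mvec n k) t ht
    have hival := ih (by omega)
    rw [hival] at hs
    have hm : mvec n k ⟨t, ht⟩ = if t < k then 1 else if t < 2*k+1 then -1 else 1 := rfl
    rw [hm] at hs
    rw [hs]
    split_ifs <;> push_cast <;> omega

lemma le_mvec (v : Fin n → ℤ) (hv : isPM v) (k : ℕ) (hk : 2*k+1 ≤ n)
    (hneg : Sv v (2*k+1) ≤ -1) : ple v (mvec n k) := by
  rw [ple_iff]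
  intro j hj
  rw [Sv_mvec k hk j hj]
  rcases Nat.lt_or_ge j (k+1) with h1 | h1
  · have := (Sv_bound v hv j hj 0 (by omega)).1
    rw [Sv_zero] at this
    have hif : (if j ≤ k then (j:ℤ) else if j ≤ 2*k+1 then 2*(k:ℤ) - j else (j:ℤ) - 2*k - 2) = j := by
      split_ifs <;> omega
    rw [hif]; push_cast at this ⊢; omega
  · rcases Nat.lt_or_ge j (2*k+2) with h2 | h2
    · have := (Sv_bound v hv (2*k+1) hk j (by omega)).2
      split_ifs <;> push_cast at this ⊢ <;> omega
    · have := (Sv_bound v hv j hj (2*k+1) (by omega)).1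
      split_ifs <;> push_cast at this ⊢ <;> omega

lemma cum_zero (k : Fin n) : cum (0 : Fin n → ℤ) k = 0 := by simp [cum]

lemma mvec_inQ (hn : 3 ≤ n) (k : ℕ) (hk : 2*k+1 ≤ n) : inQ (mvec n k) := by
  refine ⟨?_, ?_, ?_⟩
  · intro i; unfold mvec; split_ifs <;> simp
  · intro h
    rcases Nat.eq_zero_or_pos k with hk0 | hk0
    · have := h ⟨2, by omega⟩
      rw [cum_zero, cum_eq, Sv_mvec k hk 3 (by omega)] at this
      subst hk0; norm_num at this
    · have := h ⟨0, by omega⟩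
      rw [cum_zero, cum_eq, Sv_mvec k hk 1 (by omega)] at this
      have h1 : (1:ℕ) ≤ k := hk0
      split_ifs at this <;> push_cast at this <;> omega
  · intro h
    have := h ⟨2*k, by omega⟩
    rw [cum_zero, cum_eq, Sv_mvec k hk (2*k+1) (by omega)] at this
    split_ifs at this <;> push_cast at this <;> omega

lemma eq_of_Sv_eq (v w : Fin n → ℤ) (h : ∀ j ≤ n, Sv v j = Sv w j) : v = w := by
  funext i
  have h1 := Sv_succ v i.1 i.isLt
  have h2 := Sv_succ w i.1 i.isLt
  have e1 := h (i.1+1) i.isLt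
  have e2 := h i.1 (by omega)
  have : v ⟨i.1, i.isLt⟩ = w ⟨i.1, i.isLt⟩ := by omega
  simpa using this

lemma eq_of_ge_mvec (k : ℕ) (hk : 2*k+1 ≤ n) (w : Fin n → ℤ) (hw : inQ w)
    (hle : ple (mvec n k) w) : w = mvec n k := by
  obtain ⟨hpm, _, hneg⟩ := hw
  rw [ple_iff] at hle
  -- find negative partial sum of w
  have : ∃ t ≤ n, Sv w t ≤ -1 := by
    by_contra hcon
    push_neg at hcon
    apply hneg
    intro j
    rw [cum_zero, cum_eq]
    have := hcon (j.1+1) j.isLt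
    omega
  obtain ⟨t, htn, htneg⟩ := this
  -- t must be 2k+1
  have hmt := hle t htn
  have hform := Sv_mvec k hk t htn
  have ht : t = 2*k+1 := by
    by_contra hne
    rw [hform] at hmt
    split_ifs at hmt <;> push_cast at hmt <;> omega
  subst ht
  have h2 := le_mvec w hpm k hk htneg
  rw [ple_iff] at h2
  exact eq_of_Sv_eq w (mvec n k) (fun j hj => le_antisymm (h2 j hj) (hle j hj))

lemma exists_neg_odd (v : Fin n → ℤ) (hv : isPM v) (t : ℕ) (ht : t ≤ n) (hneg : Sv v t ≤ -1) :
    ∃ k, 2*k+1 ≤ n ∧ Sv v (2*k+1) ≤ -1 := by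
  rcases Nat.even_or_odd t with he | ho
  · -- t even, Sv v t even so ≤ -2, look at t-1
    have hpar := Sv_parity v hv t ht
    have ht1 : 1 ≤ t := by
      rcases Nat.eq_zero_or_pos t with h0 | h0
      · rw [h0, Sv_zero] at hneg; omega
      · exact h0
    have ht2 : 2 ≤ t := by
      obtain ⟨m, hm⟩ := he; omega
    have hlt : t - 1 < n := by omega
    have hs := Sv_succ v (t-1) hlt
    have hrw : t - 1 + 1 = t := by omega
    rw [hrw] at hs
    have hle2 : Sv v t ≤ -2 := by
      obtain ⟨m, hm⟩ := he
      omega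
    refine ⟨(t-2)/2, by omega, ?_⟩
    have : 2 * ((t-2)/2) + 1 = t - 1 := by
      obtain ⟨m, hm⟩ := he; omega
    rw [this]
    rcases hv ⟨t-1, hlt⟩ with h1 | h1 <;> omega
  · obtain ⟨m, hm⟩ := ho
    exact ⟨m, by omega, by rw [← hm] at *; omega⟩

lemma cum_neg (v : Fin n → ℤ) (k : Fin n) : cum (-v) k = - cum v k := by
  simp [cum, Finset.sum_neg_distrib]

lemma ple_neg (v w : Fin n → ℤ) : ple (-w) (-v) ↔ ple v w := by
  constructor <;> intro h k <;> have := h k <;> simp [cum_neg] at this ⊢ <;> omega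

lemma inQ_neg (v : Fin n → ℤ) (hv : inQ v) : inQ (-v) := by
  obtain ⟨hpm, h1, h2⟩ := hv
  refine ⟨?_, ?_, ?_⟩
  · intro i; rcases hpm i with h | h <;> simp [h]
  · intro hc; apply h2; intro k
    have := hc k; rw [cum_neg, cum_zero] at this; rw [cum_zero]; omega
  · intro hc; apply h1; intro k
    have := hc k; rw [cum_neg, cum_zero] at this; rw [cum_zero]; omega

lemma maximal_iff (hn : 3 ≤ n) (v : Fin n → ℤ) (hv : inQ v) :
    (¬∃ w : Fin n → ℤ, inQ w ∧ ple v w ∧ v ≠ w) ↔ ∃ k ≤ (n - 1) / 2, v = mvec n k := by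
  constructor
  · intro hmax
    obtain ⟨hpm, h1, h2⟩ := hv
    have : ∃ t ≤ n, Sv v t ≤ -1 := by
      by_contra hcon
      push_neg at hcon
      apply h2
      intro j
      rw [cum_zero, cum_eq]
      have := hcon (j.1+1) j.isLt
      omega
    obtain ⟨t, htn, htneg⟩ := this
    obtain ⟨k, hk, hkneg⟩ := exists_neg_odd v hpm t htn htneg
    have hple := le_mvec v hpm k hk hkneg
    have hmQ := mvec_inQ hn k hk
    have hveq : v = mvec n k := by
      by_contra hne
      exact hmax ⟨mvec n k, hmQ, hple, hne⟩
    exact ⟨k, by omega, hveq⟩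
  · rintro ⟨k, hk, rfl⟩ ⟨w, hwQ, hle, hne⟩
    have hkn : 2*k+1 ≤ n := by omega
    exact hne (eq_of_ge_mvec k hkn w hwQ hle).symm

theorem stmt8' {n : ℕ} (hn : 3 ≤ n) (v : Fin n → ℤ) (hv : inQ v) :
    ((¬∃ w : Fin n → ℤ, inQ w ∧ ple v w ∧ v ≠ w) ↔
      ∃ k ≤ (n - 1) / 2, v = mvec n k) ∧
    ((¬∃ w : Fin n → ℤ, inQ w ∧ ple w v ∧ w ≠ v) ↔
      ∃ k ≤ (n - 1) / 2, v = -mvec n k) := by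
  constructor
  · exact maximal_iff hn v hv
  · have hnegQ := inQ_neg v hv
    have hmax := maximal_iff hn (-v) hnegQ
    constructor
    · intro hmin
      have : ¬∃ w : Fin n → ℤ, inQ w ∧ ple (-v) w ∧ (-v) ≠ w := by
        rintro ⟨w, hwQ, hle, hne⟩
        refine hmin ⟨-w, inQ_neg w hwQ, ?_, ?_⟩
        · rw [← ple_neg]; simpa using hle
        · intro hc; apply hne; rw [← hc]; simp
      obtain ⟨k, hk, hkeq⟩ := hmax.mp this
      exact ⟨k, hk, by rw [← hkeq]; simp⟩
    · rintro ⟨k, hk, rfl⟩ ⟨w, hwQ, hle, hne⟩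
      have : -(-(mvec n k)) = mvec n k := by simp
      apply hmax.mpr ⟨k, hk, by simp⟩
      refine ⟨-w, inQ_neg w hwQ, ?_, ?_⟩
      · rw [← ple_neg] at hle; simpa using hle
      · intro hc; apply hne
        have := congrArg Neg.neg hc
        simpa using this.symm

end Aux

theorem stmt8 {n : ℕ} (hn : 3 ≤ n) (v : Fin n → ℤ) (hv : inQ v) :
    ((¬∃ w : Fin n → ℤ, inQ w ∧ ple v w ∧ v ≠ w) ↔
      ∃ k ≤ (n - 1) / 2, v = mvec n k) ∧
    ((¬∃ w : Fin n → ℤ, inQ w ∧ ple w v ∧ w ≠ v) ↔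
      ∃ k ≤ (n - 1) / 2, v = -mvec n k) := by
  exact Aux.stmt8' hn v hv
end
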